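/- arXiv:1802.03727 — 10 statements merged into one kernel-verified Lean document; each statement's English description precedes it below -/
import Mathlib

section
/- For any real d ≥ 2 and any integer k with k > log₂(2d/log d − 1) and 2^k + 1 > 2d/log d, one has (d + k·2^(k−1))/(2^k + 1) ≥ (1/2)·log d. More generally, for all real d ≥ 1 and all integers k ≥ 0, (d + k·2^(k−1))/(2^k + 1) ≥ (1/2)·log d. -/
/-- For all real `d ≥ 1` and all integers `k ≥ 0`,
`(d + k·2^(k−1))/(2^k + 1) ≥ (1/2)·log d` (natural logarithm). -/
theorem stmt_0 (d : ℝ) (hd : 1 ≤ d) (k : ℕ) :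
    (1 / 2) * Real.log d ≤ (d + (k : ℝ) * (2 : ℝ) ^ ((k : ℝ) - 1)) / ((2 : ℝ) ^ k + 1) := by
  have hd0 : (0:ℝ) < d := by linarith
  have hpos : (0:ℝ) < (2:ℝ)^k + 1 := by positivity
  have hrw : (2:ℝ) ^ ((k:ℝ) - 1) = (2:ℝ)^k / 2 := by
    rw [Real.rpow_sub (by norm_num), Real.rpow_one, Real.rpow_natCast]
  rw [hrw, le_div_iff₀ hpos]
  have h1 : Real.log d ≤ d := (Real.log_le_sub_one_of_pos hd0).trans (by linarith)
  have hek : (0:ℝ) < Real.exp k := Real.exp_pos _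
  have h2 : Real.log d - k ≤ d / Real.exp k := by
    have h := Real.log_le_sub_one_of_pos (show (0:ℝ) < d / Real.exp k by positivity)
    rw [Real.log_div (ne_of_gt hd0) (ne_of_gt hek), Real.log_exp] at h
    linarith
  have h3 : (2:ℝ)^k ≤ Real.exp k := by
    have h2e : (2:ℝ) ≤ Real.exp 1 := by
      have := Real.add_one_le_exp 1; linarith
    calc (2:ℝ)^k ≤ (Real.exp 1)^k := pow_le_pow_left₀ (by norm_num) h2e k
      _ = Real.exp k := by rw [← Real.exp_nat_mul]; ring_nf
  have hp : (0:ℝ) < (2:ℝ)^k := by positivity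
  have h4 : (2:ℝ)^k * (Real.log d - k) ≤ d := by
    calc (2:ℝ)^k * (Real.log d - k) ≤ (2:ℝ)^k * (d / Real.exp k) :=
        mul_le_mul_of_nonneg_left h2 hp.le
      _ ≤ Real.exp k * (d / Real.exp k) :=
        mul_le_mul_of_nonneg_right h3 (by positivity)
      _ = d := by field_simp
  nlinarith [h1, h4]
end

section
/- Let G be a finite simple graph with n vertices and average degree d, and suppose there is a probability distribution S over the stable (independent) sets of G such that for every vertex v, Pr(v ∈ S) = 1/k. Then for independent samples S₁, S₂ from S, the expectation E[|E(G[S₁ ∪ S₂])| − (|S₁| + |S₂|)·d/(2k)] equals 0. Consequently, there exist stable sets S₁, S₂ with |E(G[S₁ ∪ S₂])| ≥ (|S₁| + |S₂|)·d/(2k). -/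
open Finset

/-- Number of edges of the induced subgraph of `G` on `s` (as a real number):
ordered adjacent pairs inside `s`, divided by 2. -/
noncomputable def inducedEdges {V : Type*} [DecidableEq V] (G : SimpleGraph V)
    [DecidableRel G.Adj] (s : Finset V) : ℝ :=
  (((s ×ˢ s).filter fun p => G.Adj p.1 p.2).card : ℝ) / 2

/-- Let `G` have average degree `d` and let `μ` be a probability distribution over the stable
sets of `G` with `Pr(v ∈ S) = 1/k` for every vertex `v`. Then for independent samples
`S₁, S₂` the expectation `E[|E(G[S₁ ∪ S₂])| − (|S₁|+|S₂|)·d/(2k)]` is `0`; consequently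
there are stable sets `S₁, S₂` with `|E(G[S₁ ∪ S₂])| ≥ (|S₁|+|S₂|)·d/(2k)`. -/
theorem stmt_4 {V : Type*} [Fintype V] [DecidableEq V] (G : SimpleGraph V)
    [DecidableRel G.Adj] (k d : ℝ)
    (hd : d = 2 * (G.edgeFinset.card : ℝ) / Fintype.card V)
    (μ : Finset V → ℝ) (hnn : ∀ s, 0 ≤ μ s)
    (hsupp : ∀ s : Finset V, μ s ≠ 0 → ∀ x ∈ s, ∀ y ∈ s, ¬ G.Adj x y)
    (hsum : ∑ s : Finset V, μ s = 1)
    (hmarg : ∀ v : V, ∑ s ∈ (Finset.univ.filter fun s : Finset V => v ∈ s), μ s = 1 / k) :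
    (∑ s₁ : Finset V, ∑ s₂ : Finset V,
        μ s₁ * μ s₂ *
          (inducedEdges G (s₁ ∪ s₂) - ((s₁.card : ℝ) + s₂.card) * d / (2 * k))) = 0 ∧
    ∃ s₁ s₂ : Finset V, (∀ x ∈ s₁, ∀ y ∈ s₁, ¬ G.Adj x y) ∧
      (∀ x ∈ s₂, ∀ y ∈ s₂, ¬ G.Adj x y) ∧
      ((s₁.card : ℝ) + s₂.card) * d / (2 * k) ≤ inducedEdges G (s₁ ∪ s₂) := by
  classical
  set c : ℝ := 1 / k with hc
  set n : ℝ := (Fintype.card V : ℝ) with hn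
  set m : ℝ := (G.edgeFinset.card : ℝ) with hm
  -- marginals as indicator sums
  have hmarg' : ∀ v : V, ∑ s : Finset V, μ s * (if v ∈ s then (1:ℝ) else 0) = c := by
    intro v
    rw [← hmarg v, Finset.sum_filter]
    exact Finset.sum_congr rfl fun s _ => by split_ifs <;> simp
  -- n*d = 2*m
  have hnd : n * d = 2 * m := by
    by_cases h0 : Fintype.card V = 0
    · have hemp : IsEmpty V := Fintype.card_eq_zero_iff.mp h0
      have hE : G.edgeFinset = ∅ := by
        ext e
        refine e.ind fun x y => ?_
        exact (hemp.false x).elim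
      simp [hn, hm, h0, hE]
    · have hne : n ≠ 0 := by
        simp only [hn]; exact_mod_cast h0
      rw [hd]; field_simp
  -- ordered adjacent pairs
  have hE : ∑ x : V, ∑ y : V, (if G.Adj x y then (1:ℝ) else 0) = 2 * m := by
    have h1 : ∀ x : V, ∑ y : V, (if G.Adj x y then (1:ℝ) else 0) = (G.degree x : ℝ) := by
      intro x
      rw [Finset.sum_boole]
      norm_num [SimpleGraph.degree, SimpleGraph.neighborFinset_eq_filter]
    rw [Finset.sum_congr rfl fun x _ => h1 x, hm]
    exact_mod_cast SimpleGraph.sum_degrees_eq_twice_card_edges G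
  -- sums over a finset as indicator sums over univ
  have hind : ∀ (s : Finset V) (f : V → ℝ),
      ∑ x ∈ s, f x = ∑ x : V, (if x ∈ s then (1:ℝ) else 0) * f x := by
    intro s f
    have h1 : ∑ x : V, (if x ∈ s then (1:ℝ) else 0) * f x
        = ∑ x : V, if x ∈ s then f x else 0 :=
      Finset.sum_congr rfl fun x _ => by split_ifs <;> simp
    rw [h1, Finset.sum_ite_mem, Finset.univ_inter]
  -- card of a finset as indicator sum
  have hcards : ∀ s : Finset V, (s.card : ℝ) = ∑ v : V, (if v ∈ s then (1:ℝ) else 0) := by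
    intro s
    rw [Finset.sum_boole, Finset.filter_mem_eq_inter, Finset.univ_inter]
  -- expectation of |S|
  have hS : ∑ s : Finset V, μ s * (s.card : ℝ) = n * c := by
    calc ∑ s : Finset V, μ s * (s.card : ℝ)
        = ∑ s : Finset V, ∑ v : V, μ s * (if v ∈ s then (1:ℝ) else 0) := by
          refine Finset.sum_congr rfl fun s _ => ?_
          rw [hcards s, Finset.mul_sum]
      _ = ∑ v : V, ∑ s : Finset V, μ s * (if v ∈ s then (1:ℝ) else 0) := Finset.sum_comm
      _ = ∑ _v : V, c := Finset.sum_congr rfl fun v _ => hmarg' v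
      _ = n * c := by rw [Finset.sum_const, hn, nsmul_eq_mul, Finset.card_univ]
  -- cross-pair edge counts as indicator sums
  have hcard : ∀ s₁ s₂ : Finset V, (((s₁ ×ˢ s₂).filter fun p => G.Adj p.1 p.2).card : ℝ)
      = ∑ x : V, ∑ y : V, (if x ∈ s₁ then (1:ℝ) else 0) *
          ((if y ∈ s₂ then (1:ℝ) else 0) * (if G.Adj x y then (1:ℝ) else 0)) := by
    intro s₁ s₂
    rw [← Finset.sum_boole (fun p : V × V => G.Adj p.1 p.2) (s₁ ×ˢ s₂), Finset.sum_product]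
    rw [hind s₁ fun x => ∑ y ∈ s₂, if G.Adj x y then (1:ℝ) else 0]
    refine Finset.sum_congr rfl fun x _ => ?_
    rw [hind s₂ fun y => if G.Adj x y then (1:ℝ) else 0, Finset.mul_sum]
  -- 4-fold sum swap
  have swap4 : ∀ F : Finset V → Finset V → V → V → ℝ,
      (∑ s₁ : Finset V, ∑ s₂ : Finset V, ∑ x : V, ∑ y : V, F s₁ s₂ x y)
      = ∑ x : V, ∑ y : V, ∑ s₁ : Finset V, ∑ s₂ : Finset V, F s₁ s₂ x y := by
    intro F
    calc (∑ s₁ : Finset V, ∑ s₂ : Finset V, ∑ x : V, ∑ y : V, F s₁ s₂ x y)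
        = ∑ s₁ : Finset V, ∑ x : V, ∑ s₂ : Finset V, ∑ y : V, F s₁ s₂ x y :=
          Finset.sum_congr rfl fun s₁ _ => Finset.sum_comm
      _ = ∑ s₁ : Finset V, ∑ x : V, ∑ y : V, ∑ s₂ : Finset V, F s₁ s₂ x y :=
          Finset.sum_congr rfl fun s₁ _ => Finset.sum_congr rfl fun x _ => Finset.sum_comm
      _ = ∑ x : V, ∑ s₁ : Finset V, ∑ y : V, ∑ s₂ : Finset V, F s₁ s₂ x y := Finset.sum_comm
      _ = ∑ x : V, ∑ y : V, ∑ s₁ : Finset V, ∑ s₂ : Finset V, F s₁ s₂ x y :=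
          Finset.sum_congr rfl fun x _ => Finset.sum_comm
  -- the main cross term
  have hT : ∑ s₁ : Finset V, ∑ s₂ : Finset V,
      μ s₁ * μ s₂ * (((s₁ ×ˢ s₂).filter fun p => G.Adj p.1 p.2).card : ℝ) = 2 * m * (c * c) := by
    calc ∑ s₁ : Finset V, ∑ s₂ : Finset V,
            μ s₁ * μ s₂ * (((s₁ ×ˢ s₂).filter fun p => G.Adj p.1 p.2).card : ℝ)
        = ∑ s₁ : Finset V, ∑ s₂ : Finset V, ∑ x : V, ∑ y : V,
            (μ s₁ * if x ∈ s₁ then (1:ℝ) else 0) *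
              ((μ s₂ * if y ∈ s₂ then (1:ℝ) else 0) * (if G.Adj x y then (1:ℝ) else 0)) := by
          refine Finset.sum_congr rfl fun s₁ _ => Finset.sum_congr rfl fun s₂ _ => ?_
          rw [hcard s₁ s₂, Finset.mul_sum]
          refine Finset.sum_congr rfl fun x _ => ?_
          rw [Finset.mul_sum]
          exact Finset.sum_congr rfl fun y _ => by ring
      _ = ∑ x : V, ∑ y : V, ∑ s₁ : Finset V, ∑ s₂ : Finset V,
            (μ s₁ * if x ∈ s₁ then (1:ℝ) else 0) *
              ((μ s₂ * if y ∈ s₂ then (1:ℝ) else 0) * (if G.Adj x y then (1:ℝ) else 0)) :=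
          swap4 _
      _ = ∑ x : V, ∑ y : V, c * (c * (if G.Adj x y then (1:ℝ) else 0)) := by
          refine Finset.sum_congr rfl fun x _ => Finset.sum_congr rfl fun y _ => ?_
          have e2 : ∀ s₁ : Finset V, ∑ s₂ : Finset V,
              (μ s₁ * if x ∈ s₁ then (1:ℝ) else 0) *
                ((μ s₂ * if y ∈ s₂ then (1:ℝ) else 0) * (if G.Adj x y then (1:ℝ) else 0))
              = (μ s₁ * if x ∈ s₁ then (1:ℝ) else 0) *
                  (c * (if G.Adj x y then (1:ℝ) else 0)) := by
            intro s₁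
            rw [← Finset.mul_sum, ← Finset.sum_mul, hmarg' y]
          rw [Finset.sum_congr rfl fun s₁ _ => e2 s₁, ← Finset.sum_mul, hmarg' x]
      _ = 2 * m * (c * c) := by
          simp only [← Finset.mul_sum]
          rw [hE]; ring
  -- edges of the induced union graph, for stable sets
  have hU : ∀ s₁ s₂ : Finset V, (∀ x ∈ s₁, ∀ y ∈ s₁, ¬ G.Adj x y) →
      (∀ x ∈ s₂, ∀ y ∈ s₂, ¬ G.Adj x y) →
      inducedEdges G (s₁ ∪ s₂)
        = ((((s₁ ×ˢ s₂).filter fun p => G.Adj p.1 p.2).card : ℝ)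
            + (((s₂ ×ˢ s₁).filter fun p => G.Adj p.1 p.2).card : ℝ)) / 2 := by
    intro s₁ s₂ h₁ h₂
    have hset : ((s₁ ∪ s₂) ×ˢ (s₁ ∪ s₂)).filter (fun p => G.Adj p.1 p.2)
        = ((s₁ ×ˢ s₂).filter fun p => G.Adj p.1 p.2)
          ∪ ((s₂ ×ˢ s₁).filter fun p => G.Adj p.1 p.2) := by
      ext p
      simp only [Finset.mem_filter, Finset.mem_union, Finset.mem_product]
      constructor
      · rintro ⟨⟨h1', h2'⟩, ha⟩
        rcases h1' with hx1 | hx2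
        · rcases h2' with hy1 | hy2
          · exact absurd ha (h₁ _ hx1 _ hy1)
          · exact Or.inl ⟨⟨hx1, hy2⟩, ha⟩
        · rcases h2' with hy1 | hy2
          · exact Or.inr ⟨⟨hx2, hy1⟩, ha⟩
          · exact absurd ha (h₂ _ hx2 _ hy2)
      · rintro (⟨⟨hx, hy⟩, ha⟩ | ⟨⟨hx, hy⟩, ha⟩)
        · exact ⟨⟨Or.inl hx, Or.inr hy⟩, ha⟩
        · exact ⟨⟨Or.inr hx, Or.inl hy⟩, ha⟩
    have hdisj : Disjoint ((s₁ ×ˢ s₂).filter fun p => G.Adj p.1 p.2)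
        ((s₂ ×ˢ s₁).filter fun p => G.Adj p.1 p.2) := by
      rw [Finset.disjoint_left]
      rintro p hp hq
      simp only [Finset.mem_filter, Finset.mem_product] at hp hq
      exact h₁ _ hp.1.1 _ hq.1.2 hp.2
    rw [inducedEdges, hset, Finset.card_union_of_disjoint hdisj]
    push_cast
    ring
  -- the reversed cross term
  have hT' : ∑ s₁ : Finset V, ∑ s₂ : Finset V,
      μ s₁ * μ s₂ * (((s₂ ×ˢ s₁).filter fun p => G.Adj p.1 p.2).card : ℝ) = 2 * m * (c * c) := by
    rw [Finset.sum_comm]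
    rw [← hT]
    exact Finset.sum_congr rfl fun a _ => Finset.sum_congr rfl fun b _ => by ring
  -- expected number of edges in the union
  have hPart1 : ∑ s₁ : Finset V, ∑ s₂ : Finset V,
      μ s₁ * μ s₂ * inducedEdges G (s₁ ∪ s₂) = 2 * m * (c * c) := by
    have e : ∀ s₁ s₂ : Finset V, μ s₁ * μ s₂ * inducedEdges G (s₁ ∪ s₂)
        = (μ s₁ * μ s₂ * (((s₁ ×ˢ s₂).filter fun p => G.Adj p.1 p.2).card : ℝ)
            + μ s₁ * μ s₂ * (((s₂ ×ˢ s₁).filter fun p => G.Adj p.1 p.2).card : ℝ)) / 2 := by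
      intro s₁ s₂
      by_cases h1 : μ s₁ = 0
      · simp [h1]
      by_cases h2 : μ s₂ = 0
      · simp [h2]
      rw [hU s₁ s₂ (hsupp _ h1) (hsupp _ h2)]
      ring
    rw [Finset.sum_congr rfl fun s₁ _ => Finset.sum_congr rfl fun s₂ _ => e s₁ s₂]
    simp only [← Finset.sum_div, Finset.sum_add_distrib]
    rw [hT, hT']
    ring
  -- expected value of the subtracted term
  have hPart2 : ∑ s₁ : Finset V, ∑ s₂ : Finset V,
      μ s₁ * μ s₂ * (((s₁.card : ℝ) + s₂.card) * d / (2 * k))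
      = 2 * (n * c) * (d / (2 * k)) := by
    have inner : ∀ s₁ : Finset V, ∑ s₂ : Finset V,
        μ s₁ * μ s₂ * (((s₁.card : ℝ) + s₂.card) * d / (2 * k))
        = μ s₁ * ((s₁.card : ℝ) * (d / (2 * k))) + μ s₁ * (n * c * (d / (2 * k))) := by
      intro s₁
      calc ∑ s₂ : Finset V, μ s₁ * μ s₂ * (((s₁.card : ℝ) + s₂.card) * d / (2 * k))
          = ∑ s₂ : Finset V, (μ s₂ * (μ s₁ * ((s₁.card : ℝ) * (d / (2 * k))))
              + (μ s₂ * (s₂.card : ℝ)) * (μ s₁ * (d / (2 * k)))) :=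
            Finset.sum_congr rfl fun s₂ _ => by ring
        _ = (∑ s₂ : Finset V, μ s₂) * (μ s₁ * ((s₁.card : ℝ) * (d / (2 * k))))
              + (∑ s₂ : Finset V, μ s₂ * (s₂.card : ℝ)) * (μ s₁ * (d / (2 * k))) := by
            rw [Finset.sum_add_distrib, Finset.sum_mul, Finset.sum_mul]
        _ = μ s₁ * ((s₁.card : ℝ) * (d / (2 * k))) + μ s₁ * (n * c * (d / (2 * k))) := by
            rw [hsum, hS]; ring
    rw [Finset.sum_congr rfl fun s₁ _ => inner s₁, Finset.sum_add_distrib,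
      ← Finset.sum_mul]
    have e3 : ∑ x : Finset V, μ x * ((x.card : ℝ) * (d / (2 * k)))
        = (∑ x : Finset V, μ x * (x.card : ℝ)) * (d / (2 * k)) := by
      rw [Finset.sum_mul]
      exact Finset.sum_congr rfl fun x _ => by ring
    rw [e3, hS, hsum]
    ring
  -- the expectation is zero
  have hzero : (∑ s₁ : Finset V, ∑ s₂ : Finset V,
      μ s₁ * μ s₂ *
        (inducedEdges G (s₁ ∪ s₂) - ((s₁.card : ℝ) + s₂.card) * d / (2 * k))) = 0 := by
    have split : ∀ s₁ s₂ : Finset V,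
        μ s₁ * μ s₂ * (inducedEdges G (s₁ ∪ s₂) - ((s₁.card : ℝ) + s₂.card) * d / (2 * k))
        = μ s₁ * μ s₂ * inducedEdges G (s₁ ∪ s₂)
          - μ s₁ * μ s₂ * (((s₁.card : ℝ) + s₂.card) * d / (2 * k)) := fun _ _ => by ring
    rw [Finset.sum_congr rfl fun s₁ _ => Finset.sum_congr rfl fun s₂ _ => split s₁ s₂]
    simp only [Finset.sum_sub_distrib]
    rw [hPart1, hPart2]
    have hck : c = k⁻¹ := by rw [hc, one_div]
    rw [hck, div_eq_mul_inv, mul_inv]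
    linear_combination (-(k⁻¹ * k⁻¹)) * hnd
  refine ⟨hzero, ?_⟩
  -- existence
  by_contra hcon
  push_neg at hcon
  have hterm : ∀ s₁ s₂ : Finset V,
      μ s₁ * μ s₂ *
        (inducedEdges G (s₁ ∪ s₂) - ((s₁.card : ℝ) + s₂.card) * d / (2 * k)) ≤ 0 := by
    intro s₁ s₂
    by_cases h1 : μ s₁ = 0
    · simp [h1]
    by_cases h2 : μ s₂ = 0
    · simp [h2]
    have hlt := hcon s₁ s₂ (hsupp _ h1) (hsupp _ h2)
    have hpos : 0 < μ s₁ * μ s₂ :=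
      mul_pos ((hnn s₁).lt_of_ne (Ne.symm h1)) ((hnn s₂).lt_of_ne (Ne.symm h2))
    nlinarith
  have hinner : ∀ s₁ ∈ (Finset.univ : Finset (Finset V)), (∑ s₂ : Finset V,
      μ s₁ * μ s₂ *
        (inducedEdges G (s₁ ∪ s₂) - ((s₁.card : ℝ) + s₂.card) * d / (2 * k))) ≤ 0 :=
    fun s₁ _ => Finset.sum_nonpos fun s₂ _ => hterm s₁ s₂
  have hall := (Finset.sum_eq_zero_iff_of_nonpos hinner).mp hzero
  obtain ⟨s₀, hs₀⟩ : ∃ s : Finset V, μ s ≠ 0 := by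
    by_contra hall0
    push_neg at hall0
    rw [Finset.sum_congr rfl fun s _ => hall0 s] at hsum
    simp at hsum
  have h00 := (Finset.sum_eq_zero_iff_of_nonpos fun s₂ _ => hterm s₀ s₂).mp
    (hall s₀ (Finset.mem_univ s₀)) s₀ (Finset.mem_univ s₀)
  have hlt := hcon s₀ s₀ (hsupp _ hs₀) (hsupp _ hs₀)
  have hpos : 0 < μ s₀ * μ s₀ :=
    mul_pos ((hnn s₀).lt_of_ne (Ne.symm hs₀)) ((hnn s₀).lt_of_ne (Ne.symm hs₀))
  nlinarith
end

section
/- Any finite simple graph with fractional chromatic number at most k and average degree d has a bipartite induced subgraph with average degree at least d/k. -/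
open Finset

namespace Stmt5Aux

variable {V : Type*} [DecidableEq V]

/-- Real-valued indicator of membership. -/
def ind (X : Finset V) (v : V) : ℝ := if v ∈ X then 1 else 0

lemma ind_def (X : Finset V) (v : V) : ind X v = if v ∈ X then 1 else 0 := rfl

lemma ind_nonneg (X : Finset V) (v : V) : 0 ≤ ind X v := by
  rw [ind_def]; split <;> norm_num

/-- Number of ordered adjacent pairs inside `X`, as a real. -/
noncomputable def pairCnt (G : SimpleGraph V) [DecidableRel G.Adj] (X : Finset V) : ℝ :=
  (((X ×ˢ X).filter fun e => G.Adj e.1 e.2).card : ℝ)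

lemma pairCnt_empty (G : SimpleGraph V) [DecidableRel G.Adj] : pairCnt G ∅ = 0 := by
  simp [pairCnt]

lemma sum_powerset_tt (t : V → ℝ) (S : Finset V) :
    ∑ R ∈ S.powerset, (∏ u ∈ R, t u) * ∏ u ∈ S \ R, (1 - t u) = 1 := by
  rw [← Finset.prod_add]
  simp

lemma sum_powerset_tt_mem (t : V → ℝ) (S : Finset V) (v : V) (hv : v ∈ S) :
    ∑ R ∈ S.powerset,
        ((∏ u ∈ R, t u) * ∏ u ∈ S \ R, (1 - t u)) * (if v ∈ R then (1:ℝ) else 0)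
      = t v := by
  have hv' : v ∉ S.erase v := notMem_erase _ _
  rw [← insert_erase hv, Finset.sum_powerset_insert hv']
  have h1 : (∑ R ∈ (S.erase v).powerset,
      ((∏ u ∈ R, t u) * ∏ u ∈ insert v (S.erase v) \ R, (1 - t u)) *
        (if v ∈ R then (1:ℝ) else 0)) = 0 := by
    refine Finset.sum_eq_zero fun R hR => ?_
    have hvR : v ∉ R := fun h => hv' (Finset.mem_powerset.mp hR h)
    rw [if_neg hvR, mul_zero]
  have h2 : ∀ R ∈ (S.erase v).powerset,
      ((∏ u ∈ insert v R, t u) * ∏ u ∈ insert v (S.erase v) \ insert v R, (1 - t u)) *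
        (if v ∈ insert v R then (1:ℝ) else 0)
      = t v * ((∏ u ∈ R, t u) * ∏ u ∈ S.erase v \ R, (1 - t u)) := by
    intro R hR
    have hvR : v ∉ R := fun h => hv' (Finset.mem_powerset.mp hR h)
    have hsd : insert v (S.erase v) \ insert v R = S.erase v \ R := by
      ext x
      simp only [Finset.mem_sdiff, Finset.mem_insert, not_or]
      constructor
      · rintro ⟨hx1 | hx1, hx2, hx3⟩
        · exact (hx2 hx1).elim
        · exact ⟨hx1, hx3⟩
      · rintro ⟨hx1, hx2⟩
        exact ⟨Or.inr hx1, fun h => hv' (h ▸ hx1), hx2⟩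
    rw [hsd, Finset.prod_insert hvR, if_pos (Finset.mem_insert_self _ _)]
    ring
  rw [h1, zero_add, Finset.sum_congr rfl h2, ← Finset.mul_sum, sum_powerset_tt, mul_one]

lemma ind_split (G : SimpleGraph V) [DecidableRel G.Adj] {S T : Finset V} {u v : V}
    (huv : G.Adj u v)
    (hS : ∀ x ∈ S, ∀ y ∈ S, ¬ G.Adj x y) (hT : ∀ x ∈ T, ∀ y ∈ T, ¬ G.Adj x y) :
    ind (S ∪ T) u * ind (S ∪ T) v = ind S u * ind T v + ind T u * ind S v := by
  have h1 : ¬(u ∈ S ∧ v ∈ S) := fun h => hS u h.1 v h.2 huv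
  have h2 : ¬(u ∈ T ∧ v ∈ T) := fun h => hT u h.1 v h.2 huv
  simp only [ind_def, Finset.mem_union]
  by_cases a : u ∈ S <;> by_cases b : u ∈ T <;> by_cases c : v ∈ S <;> by_cases d : v ∈ T <;>
    simp_all

variable [Fintype V]

lemma pairCnt_eq_sum (G : SimpleGraph V) [DecidableRel G.Adj] (X : Finset V) :
    pairCnt G X
      = ∑ e ∈ univ.filter (fun e : V × V => G.Adj e.1 e.2), ind X e.1 * ind X e.2 := by
  have h1 : ∀ e : V × V, ind X e.1 * ind X e.2 = if e.1 ∈ X ∧ e.2 ∈ X then (1:ℝ) else 0 := by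
    intro e
    simp only [ind_def]
    split_ifs <;> simp_all
  have h2 : (univ.filter (fun e : V × V => G.Adj e.1 e.2)).filter
        (fun e => e.1 ∈ X ∧ e.2 ∈ X) = (X ×ˢ X).filter (fun e => G.Adj e.1 e.2) := by
    ext e
    simp only [Finset.mem_filter, Finset.mem_product, Finset.mem_univ, true_and]
    tauto
  rw [Finset.sum_congr rfl fun e _ => h1 e, Finset.sum_boole, h2, pairCnt]

lemma card_eq_sum_ind (X : Finset V) : (X.card : ℝ) = ∑ v, ind X v := by
  simp only [ind_def]
  rw [Finset.sum_boole, Finset.filter_univ_mem]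

theorem key (G : SimpleGraph V) [DecidableRel G.Adj] (k : ℝ) (hk : 0 < k)
    (hE : G.edgeFinset.card ≠ 0) (ν : Finset V → ℝ) (hνnn : ∀ s, 0 ≤ ν s)
    (hνsupp : ∀ s, ν s ≠ 0 → ∀ x ∈ s, ∀ y ∈ s, ¬ G.Adj x y)
    (hνtot : ∑ R : Finset V, ν R = 1)
    (hνmarg : ∀ v : V, ∑ R : Finset V, ν R * ind R v = 1 / k) :
    ∃ S₁ S₂ : Finset V, Disjoint S₁ S₂ ∧
      (∀ x ∈ S₁, ∀ y ∈ S₁, ¬ G.Adj x y) ∧ (∀ x ∈ S₂, ∀ y ∈ S₂, ¬ G.Adj x y) ∧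
      (2 * (G.edgeFinset.card : ℝ) / (Fintype.card V : ℝ)) / k
        ≤ 2 * inducedEdges G (S₁ ∪ S₂) / ((S₁ ∪ S₂).card : ℝ) := by
  set D : Finset (V × V) := univ.filter (fun e : V × V => G.Adj e.1 e.2) with hD
  have hfil : (univ.filter fun e : V × V => G.Adj e.1 e.2)
      = univ.filter fun ((x, y) : V × V) => G.Adj x y := by
    ext ⟨a, b⟩; simp
  have hDcard : (D.card : ℝ) = 2 * (G.edgeFinset.card : ℝ) := by
    rw [hD, hfil]
    exact_mod_cast (SimpleGraph.two_mul_card_edgeFinset (G := G)).symm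
  set A : ℝ := ∑ S : Finset V, ∑ T : Finset V, ν S * ν T * pairCnt G (S ∪ T) with hA
  set B : ℝ := ∑ S : Finset V, ∑ T : Finset V, ν S * ν T * ((S ∪ T).card : ℝ) with hB
  have hAval : A = (D.card : ℝ) * (2 / k ^ 2) := by
    rw [hA]
    have step1 : ∀ S T : Finset V, ν S * ν T * pairCnt G (S ∪ T)
        = ∑ e ∈ D, ((ν S * ind S e.1) * (ν T * ind T e.2)
            + (ν S * ind S e.2) * (ν T * ind T e.1)) := by
      intro S T
      by_cases h1 : ν S = 0
      · simp [h1]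
      by_cases h2 : ν T = 0
      · simp [h2]
      rw [pairCnt_eq_sum, ← hD, Finset.mul_sum]
      refine Finset.sum_congr rfl fun e he => ?_
      have hadj : G.Adj e.1 e.2 := by
        rw [hD] at he
        exact (Finset.mem_filter.mp he).2
      rw [ind_split G hadj (hνsupp S h1) (hνsupp T h2)]
      ring
    rw [Finset.sum_congr rfl fun S _ => Finset.sum_congr rfl fun T _ => step1 S T]
    rw [Finset.sum_congr rfl fun S _ => Finset.sum_comm, Finset.sum_comm]
    have step2 : ∀ e ∈ D, (∑ S : Finset V, ∑ T : Finset V,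
        ((ν S * ind S e.1) * (ν T * ind T e.2)
          + (ν S * ind S e.2) * (ν T * ind T e.1))) = 2 / k ^ 2 := by
      intro e _
      simp only [Finset.sum_add_distrib]
      rw [← Finset.sum_mul_sum, ← Finset.sum_mul_sum]
      simp only [hνmarg]
      ring
    rw [Finset.sum_congr rfl step2, Finset.sum_const, nsmul_eq_mul]
  have hMval : ∑ S : Finset V, ν S * (S.card : ℝ) = (Fintype.card V : ℝ) * (1 / k) := by
    have h1 : ∀ S : Finset V, ν S * (S.card : ℝ) = ∑ v : V, ν S * ind S v := by
      intro S
      rw [card_eq_sum_ind, Finset.mul_sum]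
    rw [Finset.sum_congr rfl fun S _ => h1 S, Finset.sum_comm]
    rw [Finset.sum_congr rfl fun v _ => hνmarg v, Finset.sum_const, nsmul_eq_mul,
      Finset.card_univ]
  have hBval : B ≤ 2 * ((Fintype.card V : ℝ) * (1 / k)) := by
    rw [hB]
    have h1 : ∀ S T : Finset V, ν S * ν T * ((S ∪ T).card : ℝ)
        ≤ (ν S * (S.card : ℝ)) * ν T + ν S * (ν T * (T.card : ℝ)) := by
      intro S T
      have hc : ((S ∪ T).card : ℝ) ≤ (S.card : ℝ) + (T.card : ℝ) := by
        exact_mod_cast Finset.card_union_le S T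
      have hnn : 0 ≤ ν S * ν T := mul_nonneg (hνnn S) (hνnn T)
      have h := mul_le_mul_of_nonneg_left hc hnn
      nlinarith [h]
    calc (∑ S : Finset V, ∑ T : Finset V, ν S * ν T * ((S ∪ T).card : ℝ))
        ≤ ∑ S : Finset V, ∑ T : Finset V,
            ((ν S * (S.card : ℝ)) * ν T + ν S * (ν T * (T.card : ℝ))) :=
          Finset.sum_le_sum fun S _ => Finset.sum_le_sum fun T _ => h1 S T
      _ = (∑ S : Finset V, ν S * (S.card : ℝ)) * (∑ T : Finset V, ν T)
            + (∑ S : Finset V, ν S) * (∑ T : Finset V, ν T * (T.card : ℝ)) := by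
          simp only [Finset.sum_add_distrib]
          rw [← Finset.sum_mul_sum, ← Finset.sum_mul_sum]
      _ = 2 * ((Fintype.card V : ℝ) * (1 / k)) := by
          rw [hMval, hνtot]
          ring
  have hApos : 0 < A := by
    have h1 : (1:ℝ) ≤ (G.edgeFinset.card : ℝ) := by
      exact_mod_cast Nat.one_le_iff_ne_zero.mpr hE
    have h2 : (0:ℝ) < 2 / k ^ 2 := by positivity
    rw [hAval, hDcard]
    nlinarith
  have hex : ∃ S T : Finset V, ν S * ν T ≠ 0 ∧ (S ∪ T).Nonempty ∧
      ((S ∪ T).card : ℝ) * A ≤ pairCnt G (S ∪ T) * B := by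
    by_contra hcon
    push_neg at hcon
    have hterm : ∀ S T : Finset V,
        ν S * ν T * (pairCnt G (S ∪ T) * B - ((S ∪ T).card : ℝ) * A) ≤ 0 := by
      intro S T
      rcases eq_or_ne (ν S * ν T) 0 with h | h
      · rw [h, zero_mul]
      rcases (S ∪ T).eq_empty_or_nonempty with he | hne
      · rw [he, pairCnt_empty]
        simp
      · have hlt := hcon S T h hne
        have hpos : 0 < ν S * ν T :=
          lt_of_le_of_ne (mul_nonneg (hνnn S) (hνnn T)) (Ne.symm h)
        exact le_of_lt (mul_neg_of_pos_of_neg hpos (by linarith))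
    have hzero : ∑ S : Finset V, ∑ T : Finset V,
        ν S * ν T * (pairCnt G (S ∪ T) * B - ((S ∪ T).card : ℝ) * A) = 0 := by
      have h1 : ∀ S T : Finset V,
          ν S * ν T * (pairCnt G (S ∪ T) * B - ((S ∪ T).card : ℝ) * A)
          = ν S * ν T * pairCnt G (S ∪ T) * B - ν S * ν T * ((S ∪ T).card : ℝ) * A :=
        fun S T => by ring
      rw [Finset.sum_congr rfl fun S _ => Finset.sum_congr rfl fun T _ => h1 S T]
      rw [Finset.sum_congr rfl fun S _ => Finset.sum_sub_distrib _ _, Finset.sum_sub_distrib]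
      simp only [← Finset.sum_mul]
      rw [← hA, ← hB]
      ring
    have hexT : ∃ S T : Finset V, ν S * ν T * pairCnt G (S ∪ T) ≠ 0 := by
      by_contra h
      push_neg at h
      have hz : A = 0 := by
        rw [hA]
        exact Finset.sum_eq_zero fun S _ => Finset.sum_eq_zero fun T _ => h S T
      exact hApos.ne' hz
    obtain ⟨S0, T0, h0⟩ := hexT
    have hνν0 : ν S0 * ν T0 ≠ 0 := fun h => h0 (by rw [h, zero_mul])
    have hpc0 : pairCnt G (S0 ∪ T0) ≠ 0 := fun h => h0 (by rw [h, mul_zero])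
    have hne0 : (S0 ∪ T0).Nonempty := by
      rcases (S0 ∪ T0).eq_empty_or_nonempty with he | hne
      · rw [he, pairCnt_empty] at hpc0
        exact absurd rfl hpc0
      · exact hne
    have hstrict : ν S0 * ν T0 * (pairCnt G (S0 ∪ T0) * B - ((S0 ∪ T0).card : ℝ) * A) < 0 := by
      have hlt := hcon S0 T0 hνν0 hne0
      have hpos : 0 < ν S0 * ν T0 :=
        lt_of_le_of_ne (mul_nonneg (hνnn S0) (hνnn T0)) (Ne.symm hνν0)
      exact mul_neg_of_pos_of_neg hpos (by linarith)
    have hlt1 : ∑ T : Finset V,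
        ν S0 * ν T * (pairCnt G (S0 ∪ T) * B - ((S0 ∪ T).card : ℝ) * A) < 0 := by
      have h := Finset.sum_lt_sum (s := (univ : Finset (Finset V)))
        (f := fun T => ν S0 * ν T * (pairCnt G (S0 ∪ T) * B - ((S0 ∪ T).card : ℝ) * A))
        (g := fun _ => (0:ℝ)) (fun T _ => hterm S0 T) ⟨T0, Finset.mem_univ _, hstrict⟩
      simpa using h
    have hlt2 : ∑ S : Finset V, ∑ T : Finset V,
        ν S * ν T * (pairCnt G (S ∪ T) * B - ((S ∪ T).card : ℝ) * A) < 0 := by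
      have h := Finset.sum_lt_sum (s := (univ : Finset (Finset V)))
        (f := fun S => ∑ T : Finset V,
          ν S * ν T * (pairCnt G (S ∪ T) * B - ((S ∪ T).card : ℝ) * A))
        (g := fun _ => (0:ℝ))
        (fun S _ => Finset.sum_nonpos fun T _ => hterm S T) ⟨S0, Finset.mem_univ _, hlt1⟩
      simpa using h
    exact absurd hzero (ne_of_lt hlt2)
  obtain ⟨Sg, Tg, hgne, hgnonempty, hgineq⟩ := hex
  refine ⟨Sg \ Tg, Tg, Finset.sdiff_disjoint, ?_, ?_, ?_⟩
  · intro x hx y hy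
    exact hνsupp Sg (left_ne_zero_of_mul hgne) x (Finset.sdiff_subset hx) y
      (Finset.sdiff_subset hy)
  · exact hνsupp Tg (right_ne_zero_of_mul hgne)
  · rw [Finset.sdiff_union_self_eq_union]
    have h2ie : 2 * inducedEdges G (Sg ∪ Tg) = pairCnt G (Sg ∪ Tg) := by
      unfold inducedEdges pairCnt
      ring
    rw [h2ie]
    have hcpos : (0:ℝ) < ((Sg ∪ Tg).card : ℝ) := by
      exact_mod_cast Finset.card_pos.mpr hgnonempty
    have hBpos : 0 < B := by
      rw [hB]
      refine Finset.sum_pos' (fun S _ => Finset.sum_nonneg fun T _ => ?_)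
        ⟨Sg, Finset.mem_univ _, ?_⟩
      · exact mul_nonneg (mul_nonneg (hνnn S) (hνnn T)) (by positivity)
      · refine Finset.sum_pos'
          (fun T _ => mul_nonneg (mul_nonneg (hνnn Sg) (hνnn T)) (by positivity))
          ⟨Tg, Finset.mem_univ _, ?_⟩
        have hpos : 0 < ν Sg * ν Tg :=
          lt_of_le_of_ne (mul_nonneg (hνnn Sg) (hνnn Tg)) (Ne.symm hgne)
        exact mul_pos hpos hcpos
    have hnpos : (0:ℝ) < (Fintype.card V : ℝ) := by
      obtain ⟨v, _⟩ := hgnonempty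
      exact_mod_cast Fintype.card_pos_iff.mpr ⟨v⟩
    have hstep1 : (2 * (G.edgeFinset.card : ℝ) / (Fintype.card V : ℝ)) / k ≤ A / B := by
      rw [div_div, div_le_div_iff₀ (by positivity) hBpos]
      have h1 : (0:ℝ) ≤ 2 * (G.edgeFinset.card : ℝ) := by positivity
      have h2 := mul_le_mul_of_nonneg_left hBval h1
      have h3 : A * ((Fintype.card V : ℝ) * k)
          = 2 * (G.edgeFinset.card : ℝ) * (2 * ((Fintype.card V : ℝ) * (1 / k))) := by
        rw [hAval, hDcard]
        field_simp
      linarith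
    have hstep2 : A / B ≤ pairCnt G (Sg ∪ Tg) / ((Sg ∪ Tg).card : ℝ) := by
      rw [div_le_div_iff₀ hBpos hcpos]
      linarith [hgineq]
    linarith

end Stmt5Aux

open Stmt5Aux in
/-- Any finite graph with fractional chromatic number at most `k` (witnessed by a probability
distribution over stable sets in which every vertex appears with probability at least `1/k`)
and average degree `d` has a bipartite induced subgraph of average degree at least `d/k`. -/
theorem stmt_5 {V : Type*} [Fintype V] [DecidableEq V] (G : SimpleGraph V)
    [DecidableRel G.Adj] (k d : ℝ) (hk : 0 < k)
    (hd : d = 2 * (G.edgeFinset.card : ℝ) / Fintype.card V)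
    (μ : Finset V → ℝ) (hnn : ∀ s, 0 ≤ μ s)
    (hsupp : ∀ s : Finset V, μ s ≠ 0 → ∀ x ∈ s, ∀ y ∈ s, ¬ G.Adj x y)
    (hsum : ∑ s : Finset V, μ s = 1)
    (hmarg : ∀ v : V, 1 / k ≤ ∑ s ∈ (Finset.univ.filter fun s : Finset V => v ∈ s), μ s) :
    ∃ S₁ S₂ : Finset V, Disjoint S₁ S₂ ∧
      (∀ x ∈ S₁, ∀ y ∈ S₁, ¬ G.Adj x y) ∧ (∀ x ∈ S₂, ∀ y ∈ S₂, ¬ G.Adj x y) ∧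
      d / k ≤ 2 * inducedEdges G (S₁ ∪ S₂) / ((S₁ ∪ S₂).card : ℝ) := by
  by_cases hE : G.edgeFinset.card = 0
  · refine ⟨∅, ∅, Finset.disjoint_empty_left _, by simp, by simp, ?_⟩
    rw [hd, hE]
    simp [inducedEdges]
  · have hppos : ∀ v : V, 0 < ∑ s ∈ (Finset.univ.filter fun s : Finset V => v ∈ s), μ s :=
      fun v => lt_of_lt_of_le (div_pos one_pos hk) (hmarg v)
    set t : V → ℝ :=
      fun v => 1 / (k * ∑ s ∈ (Finset.univ.filter fun s : Finset V => v ∈ s), μ s) with htdef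
    have ht0 : ∀ v, 0 < t v := by
      intro v
      simp only [htdef]
      exact div_pos one_pos (mul_pos hk (hppos v))
    have ht1 : ∀ v, t v ≤ 1 := by
      intro v
      simp only [htdef]
      rw [div_le_one (mul_pos hk (hppos v))]
      have h := hmarg v
      rw [div_le_iff₀ hk] at h
      linarith
    set ν : Finset V → ℝ := fun R => ∑ S : Finset V,
        if R ⊆ S then μ S * ((∏ u ∈ R, t u) * ∏ u ∈ S \ R, (1 - t u)) else 0 with hνdef
    have hpows : ∀ (f : Finset V → ℝ) (S : Finset V),
        (∑ R : Finset V, if R ⊆ S then f R else 0) = ∑ R ∈ S.powerset, f R := by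
      intro f S
      rw [← Finset.sum_filter]
      congr 1
      ext R
      simp
    have hνnn : ∀ R, 0 ≤ ν R := by
      intro R
      simp only [hνdef]
      refine Finset.sum_nonneg fun S _ => ?_
      split_ifs
      · exact mul_nonneg (hnn S) (mul_nonneg (Finset.prod_nonneg fun u _ => (ht0 u).le)
          (Finset.prod_nonneg fun u _ => by linarith [ht1 u]))
      · exact le_refl 0
    have hνsupp : ∀ R, ν R ≠ 0 → ∀ x ∈ R, ∀ y ∈ R, ¬ G.Adj x y := by
      intro R hR x hx y hy
      simp only [hνdef] at hR
      obtain ⟨S, _, hS⟩ := Finset.exists_ne_zero_of_sum_ne_zero hR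
      by_cases hRS : R ⊆ S
      · rw [if_pos hRS] at hS
        have hμS : μ S ≠ 0 := fun h => hS (by rw [h, zero_mul])
        exact hsupp S hμS x (hRS hx) y (hRS hy)
      · rw [if_neg hRS] at hS
        exact absurd rfl hS
    have hνtot : ∑ R : Finset V, ν R = 1 := by
      simp only [hνdef]
      rw [Finset.sum_comm]
      calc (∑ S : Finset V, ∑ R : Finset V,
            if R ⊆ S then μ S * ((∏ u ∈ R, t u) * ∏ u ∈ S \ R, (1 - t u)) else 0)
          = ∑ S : Finset V, μ S := by
            refine Finset.sum_congr rfl fun S _ => ?_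
            rw [hpows, ← Finset.mul_sum, sum_powerset_tt, mul_one]
        _ = 1 := hsum
    have hνmarg : ∀ v : V, ∑ R : Finset V, ν R * ind R v = 1 / k := by
      intro v
      have h1 : ∀ R : Finset V, ν R * ind R v = ∑ S : Finset V,
          (if R ⊆ S then μ S * (((∏ u ∈ R, t u) * ∏ u ∈ S \ R, (1 - t u)) *
            (if v ∈ R then (1:ℝ) else 0)) else 0) := by
        intro R
        simp only [hνdef, ind_def]
        rw [Finset.sum_mul]
        refine Finset.sum_congr rfl fun S _ => ?_
        split_ifs <;> ring
      rw [Finset.sum_congr rfl fun R _ => h1 R, Finset.sum_comm]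
      have h2 : ∀ S : Finset V, (∑ R : Finset V,
          if R ⊆ S then μ S * (((∏ u ∈ R, t u) * ∏ u ∈ S \ R, (1 - t u)) *
            (if v ∈ R then (1:ℝ) else 0)) else 0)
          = μ S * (if v ∈ S then t v else 0) := by
        intro S
        rw [hpows, ← Finset.mul_sum]
        congr 1
        by_cases hvS : v ∈ S
        · rw [if_pos hvS, sum_powerset_tt_mem t S v hvS]
        · rw [if_neg hvS]
          refine Finset.sum_eq_zero fun R hR => ?_
          have hvR : v ∉ R := fun h => hvS (Finset.mem_powerset.mp hR h)
          rw [if_neg hvR, mul_zero]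
      rw [Finset.sum_congr rfl fun S _ => h2 S]
      have h3 : ∀ S : Finset V, μ S * (if v ∈ S then t v else 0)
          = if v ∈ S then μ S * t v else 0 := by
        intro S
        split_ifs <;> ring
      rw [Finset.sum_congr rfl fun S _ => h3 S, ← Finset.sum_filter, ← Finset.sum_mul]
      simp only [htdef]
      have h4 : (∑ s ∈ (Finset.univ.filter fun s : Finset V => v ∈ s), μ s) ≠ 0 :=
        (hppos v).ne'
      field_simp
    obtain ⟨S₁, S₂, hdisj, hs1, hs2, hineq⟩ :=
      key G k hk hE ν hνnn hνsupp hνtot hνmarg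
    exact ⟨S₁, S₂, hdisj, hs1, hs2, by rw [hd]; exact hineq⟩
end

section
/- Any finite simple graph with chromatic number at most k and minimum degree d has a bipartite induced subgraph with minimum degree at least d/(2k). -/
open Finset

section Aux

variable {V : Type*} [Fintype V] [DecidableEq V] (G : SimpleGraph V) [DecidableRel G.Adj]

/-- degree of `v` inside the set `s`. -/
def deginAux (s : Finset V) (v : V) : ℕ := (s.filter fun u => G.Adj v u).card

/-- sum of internal degrees of `s`. -/
def dsumAux (s : Finset V) : ℕ := ∑ v ∈ s, deginAux G s v

lemma dsumAux_erase (T : Finset V) (v : V) (hv : v ∈ T) :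
    dsumAux G T ≤ dsumAux G (T.erase v) + 2 * deginAux G T v := by
  classical
  have hsplit : dsumAux G T = (∑ u ∈ T.erase v, deginAux G T u) + deginAux G T v := by
    rw [dsumAux, ← Finset.sum_erase_add T _ hv]
  have hpt : ∀ u ∈ T.erase v,
      deginAux G T u ≤ deginAux G (T.erase v) u + (if G.Adj u v then 1 else 0) := by
    intro u _
    by_cases hadj : G.Adj u v
    · simp only [hadj, if_true]
      have hsub : (T.filter fun w => G.Adj u w) ⊆
          insert v ((T.erase v).filter fun w => G.Adj u w) := by
        intro w hw
        simp only [mem_filter, mem_insert, mem_erase] at hw ⊢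
        rcases eq_or_ne w v with rfl | h
        · exact Or.inl rfl
        · exact Or.inr ⟨⟨h, hw.1⟩, hw.2⟩
      calc (T.filter fun w => G.Adj u w).card
          ≤ (insert v ((T.erase v).filter fun w => G.Adj u w)).card := card_le_card hsub
        _ ≤ ((T.erase v).filter fun w => G.Adj u w).card + 1 := card_insert_le _ _
    · simp only [hadj, if_false, add_zero]
      apply card_le_card
      intro w hw
      simp only [mem_filter, mem_erase] at hw ⊢
      refine ⟨⟨?_, hw.1⟩, hw.2⟩
      rintro rfl
      exact hadj hw.2
  have h2 : (∑ u ∈ T.erase v, deginAux G T u) ≤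
      dsumAux G (T.erase v) + ∑ u ∈ T.erase v, (if G.Adj u v then 1 else 0) := by
    rw [dsumAux, ← Finset.sum_add_distrib]
    exact Finset.sum_le_sum hpt
  have h3 : (∑ u ∈ T.erase v, (if G.Adj u v then 1 else 0)) ≤ deginAux G T v := by
    rw [Finset.sum_boole]
    push_cast
    apply card_le_card
    intro w hw
    simp only [mem_filter, mem_erase] at hw ⊢
    exact ⟨hw.1.2, hw.2.symm⟩
  omega

end Aux

/-- Any finite graph with chromatic number at most `k` and minimum degree `d` has a bipartite
induced subgraph (the induced subgraph on the union of two disjoint stable sets) with minimum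
degree at least `d/(2k)`. -/
theorem stmt_6 {V : Type*} [Fintype V] [DecidableEq V] [Nonempty V] (G : SimpleGraph V)
    [DecidableRel G.Adj] (k d : ℕ) (hcol : G.Colorable k)
    (hmin : ∀ v : V, d ≤ G.degree v) :
    ∃ S₁ S₂ : Finset V, Disjoint S₁ S₂ ∧
      (∀ x ∈ S₁, ∀ y ∈ S₁, ¬ G.Adj x y) ∧ (∀ x ∈ S₂, ∀ y ∈ S₂, ¬ G.Adj x y) ∧
      (S₁ ∪ S₂).Nonempty ∧
      ∀ v ∈ S₁ ∪ S₂, (d : ℝ) / (2 * k) ≤ (((S₁ ∪ S₂).filter fun u => G.Adj v u).card : ℝ) := by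
  classical
  rcases Nat.eq_zero_or_pos d with hd | hd
  · -- trivial case d = 0 : take a single vertex
    subst hd
    obtain ⟨v0⟩ := (inferInstance : Nonempty V)
    refine ⟨{v0}, ∅, by simp, ?_, by simp, by simp, ?_⟩
    · intro x hx y hy
      simp only [mem_singleton] at hx hy
      subst hx; subst hy
      exact G.loopless.irrefl _
    · intro v _
      simp only [Nat.cast_zero, zero_div]
      positivity
  -- main case
  obtain ⟨C⟩ := hcol
  have hk : 0 < k := (C (Classical.arbitrary V)).pos
  set n := Fintype.card V with hn
  have hnpos : 0 < n := Fintype.card_pos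
  set Vc : Fin k → Finset V := fun i => univ.filter fun v => C v = i with hVc
  have hmemVc : ∀ (v : V) (i : Fin k), v ∈ Vc i ↔ C v = i := by
    intro v i; simp [hVc]
  -- internal degree inside a single colour class is zero
  have hVcself : ∀ (i : Fin k) (v : V), v ∈ Vc i → deginAux G (Vc i) v = 0 := by
    intro i v hv
    rw [(hmemVc v i)] at hv
    rw [deginAux, Finset.card_eq_zero, Finset.filter_eq_empty_iff]
    intro u hu hadj
    rw [hmemVc] at hu
    exact C.valid hadj (by rw [hv, hu])
  set B : Fin k → Fin k → ℕ := fun i j => ∑ v ∈ Vc i, deginAux G (Vc j) v with hB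
  have hBzero : ∀ i, B i i = 0 := by
    intro i
    exact Finset.sum_eq_zero fun v hv => hVcself i v hv
  -- per-vertex : sum of degrees into all colour classes is the degree
  have hK1 : ∀ v : V, (∑ j, deginAux G (Vc j) v) = G.degree v := by
    intro v
    have : ∀ j, deginAux G (Vc j) v = ((G.neighborFinset v).filter fun u => C u = j).card := by
      intro j
      rw [deginAux]
      congr 1
      ext u
      simp [hVc, SimpleGraph.mem_neighborFinset, and_comm]
    simp_rw [this]
    rw [← SimpleGraph.card_neighborFinset_eq_degree]
    exact (Finset.card_eq_sum_card_fiberwise (fun u _ => mem_univ (C u))).symm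
  have hL1 : (∑ i, ∑ j, B i j) = ∑ v, G.degree v := by
    simp_rw [hB]
    rw [Finset.sum_comm]
    calc (∑ j, ∑ i, ∑ v ∈ Vc i, deginAux G (Vc j) v)
        = ∑ i, ∑ v ∈ Vc i, ∑ j, deginAux G (Vc j) v := by
          rw [Finset.sum_comm]; exact Finset.sum_congr rfl fun i _ => Finset.sum_comm
      _ = ∑ i, ∑ v ∈ Vc i, G.degree v := by
          exact Finset.sum_congr rfl fun i _ => Finset.sum_congr rfl fun v _ => hK1 v
      _ = ∑ v, G.degree v := Finset.sum_fiberwise _ _ _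
  have hL2 : (∑ i, ∑ j, B j i) = ∑ v, G.degree v := by
    rw [Finset.sum_comm]; exact hL1
  have hdegsum : d * n ≤ ∑ v, G.degree v := by
    calc d * n = ∑ _v : V, d := by rw [Finset.sum_const, card_univ, smul_eq_mul, mul_comm]
      _ ≤ ∑ v, G.degree v := Finset.sum_le_sum fun v _ => hmin v
  -- per-pair decomposition of internal degree sum
  have hpair_eq : ∀ i j : Fin k, i ≠ j →
      dsumAux G (Vc i ∪ Vc j) = B i j + B j i := by
    intro i j hij
    have hdisj : Disjoint (Vc i) (Vc j) := by
      rw [Finset.disjoint_left]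
      intro a hai haj
      rw [hmemVc] at hai haj
      exact hij (hai ▸ haj ▸ rfl)
    have hdeg1 : ∀ v ∈ Vc i, deginAux G (Vc i ∪ Vc j) v = deginAux G (Vc j) v := by
      intro v hv
      rw [deginAux, deginAux, Finset.filter_union]
      have h0 : (Vc i).filter (fun u => G.Adj v u) = ∅ := by
        rw [Finset.filter_eq_empty_iff]
        intro u hu hadj
        rw [hmemVc] at hu hv
        exact C.valid hadj (by rw [hv, hu])
      rw [h0, Finset.empty_union]
    have hdeg2 : ∀ v ∈ Vc j, deginAux G (Vc i ∪ Vc j) v = deginAux G (Vc i) v := by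
      intro v hv
      rw [deginAux, deginAux, Finset.filter_union]
      have h0 : (Vc j).filter (fun u => G.Adj v u) = ∅ := by
        rw [Finset.filter_eq_empty_iff]
        intro u hu hadj
        rw [hmemVc] at hu hv
        exact C.valid hadj (by rw [hv, hu])
      rw [h0, Finset.union_empty]
    rw [dsumAux, Finset.sum_union hdisj]
    congr 1
    · exact Finset.sum_congr rfl hdeg1
    · exact Finset.sum_congr rfl hdeg2
  -- a good pair exists
  have hgoodpair : ∃ i j : Fin k, i ≠ j ∧
      (d : ℝ) / k * ((Vc i ∪ Vc j).card : ℝ) < (dsumAux G (Vc i ∪ Vc j) : ℝ) := by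
    by_contra hno
    push_neg at hno
    -- sum of all pair degree sums
    have hlhs : (2 * (d * n) : ℕ) ≤ ∑ i, ∑ j ∈ univ.erase i, dsumAux G (Vc i ∪ Vc j) := by
      have : (∑ i, ∑ j ∈ univ.erase i, dsumAux G (Vc i ∪ Vc j))
          = ∑ i, ∑ j ∈ univ.erase i, (B i j + B j i) := by
        refine Finset.sum_congr rfl fun i _ => Finset.sum_congr rfl fun j hj => ?_
        exact hpair_eq i j (fun h => (Finset.mem_erase.mp hj).1 h.symm)
      rw [this]
      have heq : (∑ i, ∑ j ∈ univ.erase i, (B i j + B j i))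
          = (∑ i, ∑ j, B i j) + (∑ i, ∑ j, B j i) := by
        rw [← Finset.sum_add_distrib]
        refine Finset.sum_congr rfl fun i _ => ?_
        rw [Finset.sum_add_distrib]
        congr 1
        · exact Finset.sum_erase _ (hBzero i)
        · exact Finset.sum_erase _ (hBzero i)
      rw [heq, hL1, hL2]
      omega
    -- bound on total cardinalities
    have hcardVc : (∑ i, (Vc i).card) = n := by
      rw [hn, ← Finset.card_univ]
      exact (Finset.card_eq_sum_card_fiberwise (fun v _ => mem_univ (C v))).symm
    have hrhs : (∑ i, ∑ j ∈ univ.erase i, (Vc i ∪ Vc j).card) ≤ (2 * k - 1) * n := by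
      have h1 : ∀ i : Fin k, (∑ j ∈ univ.erase i, (Vc i ∪ Vc j).card)
          ≤ (k - 1) * (Vc i).card + n := by
        intro i
        calc (∑ j ∈ univ.erase i, (Vc i ∪ Vc j).card)
            ≤ ∑ j ∈ univ.erase i, ((Vc i).card + (Vc j).card) :=
              Finset.sum_le_sum fun j _ => Finset.card_union_le _ _
          _ = (univ.erase i).card * (Vc i).card + ∑ j ∈ univ.erase i, (Vc j).card := by
              rw [Finset.sum_add_distrib, Finset.sum_const, smul_eq_mul]
          _ ≤ (k - 1) * (Vc i).card + n := by
              have hce : (univ.erase i).card = k - 1 := by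
                rw [Finset.card_erase_of_mem (mem_univ i), Finset.card_univ, Fintype.card_fin]
              rw [hce]
              have : (∑ j ∈ univ.erase i, (Vc j).card) ≤ ∑ j, (Vc j).card :=
                Finset.sum_le_sum_of_subset (Finset.erase_subset _ _)
              omega
      calc (∑ i, ∑ j ∈ univ.erase i, (Vc i ∪ Vc j).card)
          ≤ ∑ i : Fin k, ((k - 1) * (Vc i).card + n) := Finset.sum_le_sum fun i _ => h1 i
        _ = (k - 1) * n + k * n := by
            rw [Finset.sum_add_distrib, ← Finset.mul_sum, hcardVc, Finset.sum_const,
              card_univ, Fintype.card_fin, smul_eq_mul]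
        _ ≤ (2 * k - 1) * n := by
            have : (k - 1) + k ≤ 2 * k - 1 := by omega
            calc (k - 1) * n + k * n = ((k - 1) + k) * n := by ring
              _ ≤ (2 * k - 1) * n := Nat.mul_le_mul_right n this
    -- real-valued comparison
    have hR : (∑ i, ∑ j ∈ univ.erase i, (dsumAux G (Vc i ∪ Vc j) : ℝ))
        ≤ (d : ℝ) / k * ∑ i, ∑ j ∈ univ.erase i, ((Vc i ∪ Vc j).card : ℝ) := by
      simp_rw [Finset.mul_sum]
      refine Finset.sum_le_sum fun i _ => Finset.sum_le_sum fun j hj => ?_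
      exact hno i j (fun h => (Finset.mem_erase.mp hj).1 h.symm)
    have hlhsR : (2 * (d * n) : ℝ) ≤ ∑ i, ∑ j ∈ univ.erase i, (dsumAux G (Vc i ∪ Vc j) : ℝ) := by
      have := hlhs
      push_cast [← Nat.cast_sum]
      exact_mod_cast this
    have hrhsR : (∑ i, ∑ j ∈ univ.erase i, ((Vc i ∪ Vc j).card : ℝ)) ≤ ((2 * k - 1 : ℕ) : ℝ) * n := by
      have := hrhs
      push_cast [← Nat.cast_sum]
      exact_mod_cast this
    have hfinal : (2 * (d * n) : ℝ) ≤ (d : ℝ) / k * (((2 * k - 1 : ℕ) : ℝ) * n) := by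
      calc (2 * (d * n) : ℝ) ≤ _ := hlhsR
        _ ≤ (d : ℝ) / k * ∑ i, ∑ j ∈ univ.erase i, ((Vc i ∪ Vc j).card : ℝ) := hR
        _ ≤ (d : ℝ) / k * (((2 * k - 1 : ℕ) : ℝ) * n) := by
            apply mul_le_mul_of_nonneg_left hrhsR
            positivity
    have hklt : ((2 * k - 1 : ℕ) : ℝ) ≤ 2 * k - 1 := by
      push_cast [Nat.cast_sub (by omega : 1 ≤ 2 * k)]
      norm_num
    have hkR : (0 : ℝ) < k := by exact_mod_cast hk
    have hdR : (1 : ℝ) ≤ d := by exact_mod_cast hd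
    have hnR : (1 : ℝ) ≤ n := by exact_mod_cast hnpos
    rw [div_mul_eq_mul_div, le_div_iff₀ hkR] at hfinal
    nlinarith [mul_le_mul_of_nonneg_left hklt (by positivity : (0:ℝ) ≤ (d : ℝ) * n)]
  obtain ⟨i, j, hij, hgt⟩ := hgoodpair
  set U := Vc i ∪ Vc j with hU
  -- choose a subset of U maximizing the potential
  set f : Finset V → ℝ := fun T => (dsumAux G T : ℝ) - (d : ℝ) / k * T.card with hf
  obtain ⟨T, hTP, hTmax⟩ := Finset.exists_max_image U.powerset f ⟨U, Finset.mem_powerset_self U⟩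
  have hTU : T ⊆ U := Finset.mem_powerset.mp hTP
  have hfT : 0 < f T := by
    have := hTmax U (Finset.mem_powerset_self U)
    have hfU : 0 < f U := by rw [hf]; dsimp only; linarith [hgt]
    linarith
  have hTne : T.Nonempty := by
    rcases T.eq_empty_or_nonempty with rfl | h
    · exfalso
      rw [hf] at hfT
      simp [dsumAux] at hfT
    · exact h
  have hkR : (0 : ℝ) < k := by exact_mod_cast hk
  -- every vertex of T has large internal degree
  have hdegT : ∀ v ∈ T, (d : ℝ) / (2 * k) ≤ (deginAux G T v : ℝ) := by
    intro v hv
    have herP : T.erase v ∈ U.powerset :=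
      Finset.mem_powerset.mpr ((Finset.erase_subset v T).trans hTU)
    have hle := hTmax (T.erase v) herP
    have hcard : ((T.erase v).card : ℝ) = (T.card : ℝ) - 1 := by
      rw [Finset.card_erase_of_mem hv]
      have : 1 ≤ T.card := Finset.card_pos.mpr ⟨v, hv⟩
      push_cast [Nat.cast_sub this]
      ring
    have hds := dsumAux_erase G T v hv
    have hdsR : (dsumAux G T : ℝ) ≤ (dsumAux G (T.erase v) : ℝ) + 2 * (deginAux G T v : ℝ) := by
      exact_mod_cast hds
    rw [hf] at hle
    dsimp only at hle
    rw [hcard] at hle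
    have h1 : (d : ℝ) / k ≤ 2 * (deginAux G T v : ℝ) := by linarith
    have h2 : (d : ℝ) / (2 * k) = ((d : ℝ) / k) / 2 := by
      rw [div_div]; ring_nf
    rw [h2]; linarith
  -- define the two stable sets
  refine ⟨T.filter (fun v => C v = i), T.filter (fun v => C v = j), ?_, ?_, ?_, ?_, ?_⟩
  · rw [Finset.disjoint_left]
    intro a ha haj
    rw [Finset.mem_filter] at ha haj
    exact hij (ha.2 ▸ haj.2 ▸ rfl)
  · intro x hx y hy hadj
    rw [Finset.mem_filter] at hx hy
    exact C.valid hadj (by rw [hx.2, hy.2])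
  · intro x hx y hy hadj
    rw [Finset.mem_filter] at hx hy
    exact C.valid hadj (by rw [hx.2, hy.2])
  all_goals {
    have hTeq : T.filter (fun v => C v = i) ∪ T.filter (fun v => C v = j) = T := by
      rw [← Finset.filter_or]
      apply Finset.filter_true_of_mem
      intro v hv
      have := hTU hv
      rw [hU, Finset.mem_union, hmemVc, hmemVc] at this
      exact this
    rw [hTeq]
    first
    | exact hTne
    | { intro v hv
        exact hdegT v hv }
  }
end

section
/- Any finite simple graph with chromatic number at most k and average degree d has two disjoint stable sets S₁, S₂ such that the induced subgraph on S₁ ∪ S₂ has average degree at least d/k. -/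
open Finset

/-- Any finite graph with chromatic number at most `k` and average degree `d` has two disjoint
stable sets `S₁, S₂` such that the induced subgraph on `S₁ ∪ S₂` has average degree at
least `d/k`. -/
theorem stmt_7 {V : Type*} [Fintype V] [DecidableEq V] (G : SimpleGraph V)
    [DecidableRel G.Adj] (k : ℕ) (d : ℝ) (hcol : G.Colorable k)
    (hd : d = 2 * (G.edgeFinset.card : ℝ) / Fintype.card V) :
    ∃ S₁ S₂ : Finset V, Disjoint S₁ S₂ ∧
      (∀ x ∈ S₁, ∀ y ∈ S₁, ¬ G.Adj x y) ∧ (∀ x ∈ S₂, ∀ y ∈ S₂, ¬ G.Adj x y) ∧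
      d / k ≤ 2 * inducedEdges G (S₁ ∪ S₂) / ((S₁ ∪ S₂).card : ℝ) := by
  classical
  by_cases hE : G.edgeFinset.card = 0
  · refine ⟨∅, ∅, disjoint_empty_left _, by simp, by simp, ?_⟩
    simp [hd, hE, inducedEdges]
  have hE1 : 1 ≤ G.edgeFinset.card := Nat.one_le_iff_ne_zero.2 hE
  set m := G.edgeFinset.card with hm
  set N := Fintype.card V with hN
  let c := hcol.some
  have hval : ∀ {a b : V}, G.Adj a b → c a ≠ c b := fun h => c.valid h
  obtain ⟨x₀, y₀, hxy₀⟩ : ∃ x y, G.Adj x y := by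
    obtain ⟨e, he⟩ := card_pos.1 hE1
    rw [SimpleGraph.mem_edgeFinset] at he
    induction e using Sym2.ind with
    | _ x y => exact ⟨x, y, he⟩
  have hk2 : 2 ≤ k := by
    have : (1:ℕ) < Fintype.card (Fin k) :=
      Fintype.one_lt_card_iff_nontrivial.2 ⟨⟨c x₀, c y₀, hval hxy₀⟩⟩
    simp at this; omega
  have hN1 : 1 ≤ N := Fintype.card_pos_iff.2 ⟨x₀⟩
  set C : Fin k → Finset V := fun i => univ.filter fun v => c v = i with hC
  set A : Fin k × Fin k → ℕ := fun q =>
    #((univ : Finset (V × V)).filter fun p => G.Adj p.1 p.2 ∧ c p.1 = q.1 ∧ c p.2 = q.2)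
    with hA
  set B : Fin k × Fin k → ℕ := fun q => #(C q.1) + #(C q.2) with hB
  -- total count of ordered adjacent pairs
  have htot : ∑ q : Fin k × Fin k, A q = 2 * m := by
    rw [hm, G.two_mul_card_edgeFinset]
    rw [card_eq_sum_card_fiberwise (f := fun p : V × V => (c p.1, c p.2))
      (t := univ) (fun a _ => mem_univ _)]
    refine (sum_congr rfl fun q _ => ?_).symm
    rw [hA, filter_filter]
    congr 1
    ext p
    simp [Prod.ext_iff, and_assoc]
  have hdiagA : ∀ i : Fin k, A (i, i) = 0 := by
    intro i
    rw [hA, card_eq_zero]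
    ext p
    simp only [mem_filter, mem_univ, true_and, notMem_empty, iff_false, not_and]
    intro hadj h1 h2
    exact hval hadj (h1.trans h2.symm)
  have hclass : ∑ i : Fin k, #(C i) = N := by
    rw [hN, ← Finset.card_univ]
    exact (card_eq_sum_card_fiberwise (f := c) (t := univ) (fun a _ => mem_univ _)).symm
  -- decompose the sum over all pairs into diag + offDiag
  have hdecomp : ∀ f : Fin k × Fin k → ℕ,
      ∑ q : Fin k × Fin k, f q
        = ∑ q ∈ (univ : Finset (Fin k)).diag, f q
          + ∑ q ∈ (univ : Finset (Fin k)).offDiag, f q := by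
    intro f
    rw [← sum_union (disjoint_diag_offDiag _), diag_union_offDiag, ← univ_product_univ]
  have hAoff : ∑ q ∈ (univ : Finset (Fin k)).offDiag, A q = 2 * m := by
    have := hdecomp A
    rw [htot, sum_diag] at this
    simp only [hdiagA, sum_const_zero, zero_add] at this
    omega
  have hBall : ∑ q : Fin k × Fin k, B q = 2 * k * N := by
    rw [Fintype.sum_prod_type]
    simp only [hB, sum_add_distrib, sum_const, card_univ, Fintype.card_fin, smul_eq_mul,
      smul_eq_mul]
    rw [← mul_sum, hclass]
    ring
  have hBdiag : ∑ q ∈ (univ : Finset (Fin k)).diag, B q = 2 * N := by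
    rw [sum_diag]
    simp only [hB]
    rw [sum_add_distrib, hclass]
    ring
  have hBoff : ∑ q ∈ (univ : Finset (Fin k)).offDiag, B q + 2 * N = 2 * k * N := by
    have := hdecomp B
    rw [hBall, hBdiag] at this
    omega
  -- averaging
  have key : ∑ q ∈ (univ : Finset (Fin k)).offDiag, m * B q
      < ∑ q ∈ (univ : Finset (Fin k)).offDiag, A q * (k * N) := by
    rw [← mul_sum, ← sum_mul, hAoff]
    have h1 : ∑ q ∈ (univ : Finset (Fin k)).offDiag, B q = 2 * k * N - 2 * N := by omega
    rw [h1]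
    have h2 : 2 * k * N - 2 * N < 2 * k * N := Nat.sub_lt (by positivity) (by positivity)
    calc m * (2 * k * N - 2 * N) < m * (2 * k * N) := by
          exact mul_lt_mul_of_pos_left h2 (by omega)
      _ = 2 * m * (k * N) := by ring
  obtain ⟨q, hqmem, hq⟩ := exists_lt_of_sum_lt key
  obtain ⟨-, -, hne⟩ := mem_offDiag.1 hqmem
  -- the chosen pair of classes
  set i := q.1
  set j := q.2
  set s := C i ∪ C j with hs
  have hApos : 0 < A q := by
    rcases Nat.eq_zero_or_pos (A q) with h | h
    · rw [h] at hq; simp at hq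
    · exact h
  have hdisj : Disjoint (C i) (C j) := by
    rw [disjoint_left]
    intro v hvi hvj
    rw [hC] at hvi hvj
    simp only [mem_filter] at hvi hvj
    exact hne (hvi.2 ▸ hvj.2 ▸ rfl)
  have hBpos : 0 < B q := by
    rw [hA] at hApos
    obtain ⟨p, hp⟩ := card_pos.1 hApos
    simp only [mem_filter, mem_univ, true_and] at hp
    have : p.1 ∈ C q.1 := by rw [hC]; simp [hp.2.1]
    have h1 : 0 < #(C q.1) := card_pos.2 ⟨p.1, this⟩
    simp only [hB]
    omega
  have hswap : A (j, i) = A q := by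
    rw [hA]
    refine card_equiv (Equiv.prodComm V V) fun p => ?_
    simp only [mem_filter, mem_univ, true_and, Equiv.prodComm_apply, Prod.fst_swap,
      Prod.snd_swap]
    constructor
    · rintro ⟨h1, h2, h3⟩; exact ⟨h1.symm, h3, h2⟩
    · rintro ⟨h1, h2, h3⟩; exact ⟨h1.symm, h3, h2⟩
  have hcount : #((s ×ˢ s).filter fun p => G.Adj p.1 p.2) = 2 * A q := by
    have hunion : ((s ×ˢ s).filter fun p => G.Adj p.1 p.2)
        = ((univ : Finset (V × V)).filter fun p => G.Adj p.1 p.2 ∧ c p.1 = i ∧ c p.2 = j)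
          ∪ ((univ : Finset (V × V)).filter fun p => G.Adj p.1 p.2 ∧ c p.1 = j ∧ c p.2 = i) := by
      ext ⟨a, b⟩
      simp only [mem_filter, mem_product, mem_union, mem_univ, true_and, hs, hC,
        Finset.mem_union, Finset.mem_filter]
      constructor
      · rintro ⟨⟨ha, hb⟩, hadj⟩
        have hne' := hval hadj
        rcases ha with ha | ha <;> rcases hb with hb | hb
        · exact absurd (ha.trans hb.symm) hne'
        · exact Or.inl ⟨hadj, ha, hb⟩
        · exact Or.inr ⟨hadj, ha, hb⟩
        · exact absurd (ha.trans hb.symm) hne'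
      · rintro (⟨hadj, ha, hb⟩ | ⟨hadj, ha, hb⟩)
        · exact ⟨⟨Or.inl ha, Or.inr hb⟩, hadj⟩
        · exact ⟨⟨Or.inr ha, Or.inl hb⟩, hadj⟩
    have hdisj2 : Disjoint
        ((univ : Finset (V × V)).filter fun p => G.Adj p.1 p.2 ∧ c p.1 = i ∧ c p.2 = j)
        ((univ : Finset (V × V)).filter fun p => G.Adj p.1 p.2 ∧ c p.1 = j ∧ c p.2 = i) := by
      rw [disjoint_left]
      intro p hp1 hp2
      simp only [mem_filter, mem_univ, true_and] at hp1 hp2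
      exact hne (hp1.2.1 ▸ hp2.2.1 ▸ rfl)
    rw [hunion, card_union_of_disjoint hdisj2]
    have h1 : #((univ : Finset (V × V)).filter fun p => G.Adj p.1 p.2 ∧ c p.1 = i ∧ c p.2 = j)
        = A q := by rw [hA]
    have h2 : #((univ : Finset (V × V)).filter fun p => G.Adj p.1 p.2 ∧ c p.1 = j ∧ c p.2 = i)
        = A (j, i) := by rw [hA]
    rw [h1, h2, hswap]
    ring
  have hcards : #(C i ∪ C j) = B q := by
    rw [card_union_of_disjoint hdisj, hB]
  refine ⟨C i, C j, hdisj, ?_, ?_, ?_⟩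
  · intro x hx y hy hadj
    rw [hC] at hx hy
    simp only [mem_filter] at hx hy
    exact hval hadj (hx.2.trans hy.2.symm)
  · intro x hx y hy hadj
    rw [hC] at hx hy
    simp only [mem_filter] at hx hy
    exact hval hadj (hx.2.trans hy.2.symm)
  · have hqR : (m : ℝ) * B q ≤ A q * (k * N) := by exact_mod_cast hq.le
    have hk0 : (0:ℝ) < k := by positivity
    have hN0 : (0:ℝ) < N := by exact_mod_cast hN1
    have hB0 : (0:ℝ) < B q := by exact_mod_cast hBpos
    have hi : inducedEdges G (C i ∪ C j) = (A q : ℝ) := by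
      rw [inducedEdges]
      rw [show (C i ∪ C j) = s from rfl, hcount]
      push_cast
      ring
    rw [hi, hcards, hd, div_div, div_le_div_iff₀ (by positivity) hB0]
    nlinarith [hqR]
end

section
/- Let G be a graph, L a k-list-assignment of G with maximum separation (|L(u) ∩ L(v)| ≤ 1 for every edge uv), and suppose G is adaptably k-choosable. Then G admits a proper L-colouring. In particular, the adaptable choosability of G is at least its separation choosability: ch_a(G) ≥ ch_sep(G). -/
/-- `G` is adaptably `k`-choosable: for every `k`-list-assignment `L` and every edge
labelling `ℓ`, there is an `L`-colouring `c` such that no edge `uv` has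
`c u = c v = ℓ(uv)`. -/
def AdaptablyChoosable {V : Type*} (G : SimpleGraph V) (k : ℕ) : Prop :=
  ∀ L : V → Finset ℕ, (∀ v, (L v).card = k) →
    ∀ ℓ : Sym2 V → ℕ, ∃ c : V → ℕ, (∀ v, c v ∈ L v) ∧
      ∀ u v, G.Adj u v → ¬ (c u = c v ∧ c v = ℓ s(u, v))

/-- `G` is separation `k`-choosable: every `k`-list-assignment with maximum separation
admits a proper `L`-colouring. -/
def SeparationChoosable {V : Type*} (G : SimpleGraph V) (k : ℕ) : Prop :=
  ∀ L : V → Finset ℕ, (∀ v, (L v).card = k) →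
    (∀ u v, G.Adj u v → (L u ∩ L v).card ≤ 1) →
    ∃ c : V → ℕ, (∀ v, c v ∈ L v) ∧ ∀ u v, G.Adj u v → c u ≠ c v

/-- The adaptable choosability of `G`. -/
noncomputable def chAdapt {V : Type*} (G : SimpleGraph V) : ℕ :=
  sInf {k | AdaptablyChoosable G k}

/-- The separation choosability of `G`. -/
noncomputable def chSep {V : Type*} (G : SimpleGraph V) : ℕ :=
  sInf {k | SeparationChoosable G k}


lemma adapt_imp_sep {V : Type*} (G : SimpleGraph V) (k : ℕ)
    (h : AdaptablyChoosable G k) : SeparationChoosable G k := by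
  intro L hL hsep
  let ℓ : Sym2 V → ℕ := Sym2.lift ⟨fun u v => ((L u ∩ L v).min).getD 0, by
    intro u v; simp [Finset.inter_comm]⟩
  obtain ⟨c, hc, hadj⟩ := h L hL ℓ
  refine ⟨c, hc, fun u v huv heq => hadj u v huv ⟨heq, ?_⟩⟩
  have hm : c v ∈ L u ∩ L v := Finset.mem_inter.2 ⟨heq ▸ hc u, hc v⟩
  have hsing : L u ∩ L v = {c v} := by
    refine Finset.eq_singleton_iff_unique_mem.2 ⟨hm, fun x hx => ?_⟩
    exact Finset.card_le_one.mp (hsep u v huv) x hx (c v) hm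
  show c v = ℓ s(u, v)
  simp [ℓ, Sym2.lift_mk, hsing]
  rfl

/-- If `L` is a `k`-list-assignment of maximum separation and `G` is adaptably `k`-choosable,
then `G` admits a proper `L`-colouring; in particular `ch_sep(G) ≤ ch_a(G)`. -/
theorem stmt_8 {V : Type*} [Fintype V] (G : SimpleGraph V) (k : ℕ)
    (L : V → Finset ℕ) (hL : ∀ v, (L v).card = k)
    (hsep : ∀ u v, G.Adj u v → (L u ∩ L v).card ≤ 1)
    (hadapt : AdaptablyChoosable G k) :
    (∃ c : V → ℕ, (∀ v, c v ∈ L v) ∧ ∀ u v, G.Adj u v → c u ≠ c v) ∧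
      chSep G ≤ chAdapt G := by
  constructor
  · exact adapt_imp_sep G k hadapt L hL hsep
  · have hne : {k | AdaptablyChoosable G k}.Nonempty := ⟨k, hadapt⟩
    have hmem := Nat.sInf_mem hne
    exact Nat.sInf_le (adapt_imp_sep G _ hmem)
end

section
/- Let G be a finite triangle-free graph, let v be a vertex of G with degree d(v), and let T be a stable set of G − N[v]. Among stable sets S of G with S ∩ (V(G) − N[v]) = T, chosen uniformly at random, the expectation of X_v = d(v)·1[v ∈ S] + |N(v) ∩ S| equals (d(v) + k·2^(k−1))/(2^k + 1), where k is the number of neighbours of v having no neighbour in T. -/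
open Finset

lemma pow_aux (n : ℕ) : n * 2 ^ (n - 1) + (n * 2 ^ (n - 1) + 2 ^ n)
    = (n + 1) * 2 ^ (n + 1 - 1) := by
  cases n with
  | zero => simp
  | succ m =>
    simp only [Nat.add_sub_cancel, pow_succ]
    ring

lemma sum_powerset_card' {α : Type*} [DecidableEq α] (s : Finset α) :
    ∑ U ∈ s.powerset, U.card = s.card * 2 ^ (s.card - 1) := by
  induction s using Finset.induction_on with
  | empty => simp
  | @insert a s ha ih =>
    rw [Finset.sum_powerset_insert ha]
    have : ∑ U ∈ s.powerset, (insert a U).card = ∑ U ∈ s.powerset, (U.card + 1) := by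
      apply Finset.sum_congr rfl
      intro U hU
      rw [Finset.card_insert_of_notMem]
      exact fun h => ha (Finset.mem_powerset.1 hU h)
    rw [this, Finset.sum_add_distrib, Finset.sum_const, Finset.card_powerset, ih,
      Finset.card_insert_of_notMem ha, smul_eq_mul, mul_one]
    exact pow_aux s.card

/-- Let `G` be a finite triangle-free graph, `v` a vertex, and `T` a stable set of
`G − N[v]`. Among the stable sets `S` of `G` with `S ∩ (V(G) − N[v]) = T`, chosen uniformly,
the expectation of `X_v = d(v)·1[v ∈ S] + |N(v) ∩ S|` equals
`(d(v) + k·2^(k−1))/(2^k + 1)`, where `k` is the number of neighbours of `v` having no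
neighbour in `T`. -/
theorem stmt_10 {V : Type*} [Fintype V] [DecidableEq V] (G : SimpleGraph V)
    [DecidableRel G.Adj] (htf : G.CliqueFree 3) (v : V) (T : Finset V)
    (hTstable : ∀ x ∈ T, ∀ y ∈ T, ¬ G.Adj x y)
    (hTdisj : Disjoint T (insert v (G.neighborFinset v)))
    (k : ℕ)
    (hk : k = ((G.neighborFinset v).filter fun u => ∀ w ∈ T, ¬ G.Adj u w).card)
    (𝒮 : Finset (Finset V))
    (h𝒮 : 𝒮 = Finset.univ.filter fun S : Finset V =>
      (∀ x ∈ S, ∀ y ∈ S, ¬ G.Adj x y) ∧ S \ insert v (G.neighborFinset v) = T) :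
    (∑ S ∈ 𝒮, (((G.degree v) * (if v ∈ S then 1 else 0)
        + ((G.neighborFinset v) ∩ S).card : ℕ) : ℝ)) / (𝒮.card : ℝ)
      = ((G.degree v : ℝ) + (k * 2 ^ (k - 1) : ℕ)) / ((2 : ℝ) ^ k + 1) := by
  set A := (G.neighborFinset v).filter fun u => ∀ w ∈ T, ¬ G.Adj u w with hA
  have memN : ∀ w, w ∈ G.neighborFinset v ↔ G.Adj v w := fun w =>
    SimpleGraph.mem_neighborFinset G v w
  have hvT : v ∉ T := fun h => Finset.disjoint_left.1 hTdisj h (Finset.mem_insert_self _ _)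
  have hTN : ∀ w ∈ T, w ∉ G.neighborFinset v := fun w hw hn =>
    Finset.disjoint_left.1 hTdisj hw (Finset.mem_insert_of_mem hn)
  have hvA : v ∉ A := fun h => G.irrefl ((memN _).1 (Finset.mem_filter.1 h).1)
  -- neighbourhood is stable (triangle-free)
  have hNstable : ∀ a ∈ G.neighborFinset v, ∀ b ∈ G.neighborFinset v, ¬ G.Adj a b := by
    intro a ha b hb hab
    exact htf {v, a, b} (SimpleGraph.is3Clique_triple_iff.2
      ⟨(memN _).1 ha, (memN _).1 hb, hab⟩)
  -- characterization of 𝒮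
  have hchar : 𝒮 = insert (insert v T) ((A.powerset).image fun U => T ∪ U) := by
    rw [h𝒮]
    ext S
    simp only [Finset.mem_filter, Finset.mem_univ, true_and, Finset.mem_insert,
      Finset.mem_image, Finset.mem_powerset]
    constructor
    · rintro ⟨hstab, hdiff⟩
      by_cases hv : v ∈ S
      · left
        apply Finset.Subset.antisymm
        · intro x hx
          by_cases hx' : x ∈ insert v (G.neighborFinset v)
          · rcases Finset.mem_insert.1 hx' with h | h
            · exact Finset.mem_insert.2 (Or.inl h)
            · exact absurd ((memN _).1 h) (hstab v hv x hx)
          · exact Finset.mem_insert_of_mem (hdiff ▸ Finset.mem_sdiff.2 ⟨hx, hx'⟩)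
        · intro x hx
          rcases Finset.mem_insert.1 hx with h | h
          · exact h ▸ hv
          · rw [← hdiff] at h
            exact (Finset.mem_sdiff.1 h).1
      · right
        refine ⟨S ∩ G.neighborFinset v, Finset.subset_iff.2 ?_, ?_⟩
        · intro u hu
          obtain ⟨huS, huN⟩ := Finset.mem_inter.1 hu
          exact Finset.mem_filter.2 ⟨huN, fun w hw hadj =>
            hstab u huS w (by
              rw [← hdiff] at hw
              exact (Finset.mem_sdiff.1 hw).1) hadj⟩
        · ext x
          simp only [Finset.mem_union, Finset.mem_inter]
          constructor
          · intro hx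
            rcases hx with h | ⟨h, _⟩
            · rw [← hdiff] at h; exact (Finset.mem_sdiff.1 h).1
            · exact h
          · intro hx
            by_cases hxN : x ∈ G.neighborFinset v
            · exact Or.inr ⟨hx, hxN⟩
            · left
              rw [← hdiff]
              exact Finset.mem_sdiff.2 ⟨hx, by
                simp only [Finset.mem_insert, hxN, or_false]
                rintro rfl; exact hv hx⟩
    · rintro (rfl | ⟨U, hU, rfl⟩)
      · constructor
        · intro x hx y hy hadj
          rcases Finset.mem_insert.1 hx with hxv | hxT <;>
            rcases Finset.mem_insert.1 hy with hyv | hyT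
          · exact G.irrefl (hxv ▸ hyv ▸ hadj)
          · exact hTN y hyT ((memN _).2 (hxv ▸ hadj))
          · exact hTN x hxT ((memN _).2 (hyv ▸ hadj).symm)
          · exact hTstable x hxT y hyT hadj
        · ext x
          simp only [Finset.mem_sdiff, Finset.mem_insert]
          constructor
          · rintro ⟨h1 | h1, h2⟩
            · exact absurd (Or.inl h1) h2
            · exact h1
          · intro hx
            exact ⟨Or.inr hx, by
              push_neg
              exact ⟨fun h => hvT (h ▸ hx), hTN x hx⟩⟩
      · have hUN : U ⊆ G.neighborFinset v := hU.trans (Finset.filter_subset _ _)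
        constructor
        · intro x hx y hy hadj
          rcases Finset.mem_union.1 hx with hx | hx <;>
            rcases Finset.mem_union.1 hy with hy | hy
          · exact hTstable x hx y hy hadj
          · exact (Finset.mem_filter.1 (hU hy)).2 x hx hadj.symm
          · exact (Finset.mem_filter.1 (hU hx)).2 y hy hadj
          · exact hNstable x (hUN hx) y (hUN hy) hadj
        · ext x
          simp only [Finset.mem_sdiff, Finset.mem_union, Finset.mem_insert]
          constructor
          · rintro ⟨h1 | h1, h2⟩
            · exact h1
            · exact absurd (Or.inr (hUN h1)) h2
          · intro hx
            exact ⟨Or.inl hx, by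
              push_neg
              exact ⟨fun h => hvT (h ▸ hx), fun h => hTN x hx h⟩⟩
  -- injectivity and non-membership facts
  have hdisjTA : ∀ U ⊆ A, T ∩ U = ∅ := by
    intro U hU
    apply Finset.eq_empty_of_forall_notMem
    intro x hx
    obtain ⟨h1, h2⟩ := Finset.mem_inter.1 hx
    exact hTN x h1 (Finset.mem_of_mem_filter x (hU h2))
  have hinj : Set.InjOn (fun U => T ∪ U) A.powerset := by
    intro U1 h1 U2 h2 h
    have key : ∀ U ⊆ A, (T ∪ U) ∩ A = U := by
      intro U hU
      have hTA : T ∩ A = ∅ := Finset.eq_empty_of_forall_notMem fun x hx =>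
        hTN x (Finset.mem_inter.1 hx).1
          (Finset.mem_of_mem_filter x (Finset.mem_inter.1 hx).2)
      rw [Finset.union_inter_distrib_right, hTA, Finset.empty_union,
        Finset.inter_eq_left.2 hU]
    have h' : T ∪ U1 = T ∪ U2 := h
    rw [← key U1 (Finset.mem_powerset.1 (Finset.mem_coe.1 h1)),
      ← key U2 (Finset.mem_powerset.1 (Finset.mem_coe.1 h2)), h']
  have hvnotmem : insert v T ∉ (A.powerset).image fun U => T ∪ U := by
    intro h
    obtain ⟨U, hU, hEq⟩ := Finset.mem_image.1 h
    have : v ∈ T ∪ U := hEq.symm ▸ Finset.mem_insert_self v T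
    rcases Finset.mem_union.1 this with h | h
    · exact hvT h
    · exact hvA (Finset.mem_powerset.1 hU h)
  -- cardinality
  have hcard : (𝒮.card : ℝ) = 2 ^ k + 1 := by
    rw [hchar, Finset.card_insert_of_notMem hvnotmem, Finset.card_image_of_injOn hinj,
      Finset.card_powerset, hk]
    push_cast
    ring
  -- the sum
  have hsum : (∑ S ∈ 𝒮, (((G.degree v) * (if v ∈ S then 1 else 0)
      + ((G.neighborFinset v) ∩ S).card : ℕ) : ℝ))
      = (G.degree v : ℝ) + (k * 2 ^ (k - 1) : ℕ) := by
    rw [hchar, Finset.sum_insert hvnotmem, Finset.sum_image hinj]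
    have h1 : ((G.degree v) * (if v ∈ insert v T then 1 else 0)
        + ((G.neighborFinset v) ∩ (insert v T)).card : ℕ) = G.degree v := by
      rw [if_pos (Finset.mem_insert_self _ _)]
      have : (G.neighborFinset v) ∩ (insert v T) = ∅ := by
        apply Finset.eq_empty_of_forall_notMem
        intro x hx
        obtain ⟨h1, h2⟩ := Finset.mem_inter.1 hx
        rcases Finset.mem_insert.1 h2 with rfl | h2
        · exact G.irrefl ((memN _).1 h1)
        · exact hTN x h2 h1
      rw [this]
      simp
    have h2 : ∀ U ∈ A.powerset, ((G.degree v) * (if v ∈ T ∪ U then 1 else 0)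
        + ((G.neighborFinset v) ∩ (T ∪ U)).card : ℕ) = U.card := by
      intro U hU
      have hU' := Finset.mem_powerset.1 hU
      have hv' : v ∉ T ∪ U := fun h => by
        rcases Finset.mem_union.1 h with h | h
        · exact hvT h
        · exact hvA (hU' h)
      rw [if_neg hv', mul_zero, zero_add]
      congr 1
      rw [Finset.inter_union_distrib_left]
      have e1 : G.neighborFinset v ∩ T = ∅ :=
        Finset.eq_empty_of_forall_notMem fun x hx =>
          hTN x (Finset.mem_inter.1 hx).2 (Finset.mem_inter.1 hx).1
      have e2 : G.neighborFinset v ∩ U = U :=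
        Finset.inter_eq_right.2 (hU'.trans (Finset.filter_subset _ _))
      rw [e1, e2, Finset.empty_union]
    have h2' : ∀ U ∈ A.powerset, (((G.degree v) * (if v ∈ T ∪ U then 1 else 0)
        + ((G.neighborFinset v) ∩ (T ∪ U)).card : ℕ) : ℝ) = ((U.card : ℕ) : ℝ) :=
      fun U hU => congrArg (Nat.cast : ℕ → ℝ) (h2 U hU)
    rw [Finset.sum_congr rfl h2', h1, ← Nat.cast_sum, sum_powerset_card', ← hk]
  rw [hsum, hcard]
end

section
/- Every finite triangle-free graph G with minimum degree d ≥ 1 contains a semi-bipartite induced subgraph of average degree at least (1/2)·log d; that is, there is a stable set S of G such that the bipartite subgraph between S and V(G) \ S has average degree at least (1/2)·log d. -/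
open Finset

lemma aux_sum_powerset_card {α : Type*} [DecidableEq α] (A : Finset α) :
    2 * ∑ B ∈ A.powerset, B.card = A.card * 2 ^ A.card := by
  have hdd : ∀ B ∈ A.powerset, A \ (A \ B) = B := by
    intro B hB
    have hBA := Finset.mem_powerset.1 hB
    ext a
    simp only [Finset.mem_sdiff, not_and, not_not]
    constructor
    · rintro ⟨ha, h⟩; exact h ha
    · intro ha; exact ⟨hBA ha, fun _ => ha⟩
  have h : ∑ B ∈ A.powerset, (A \ B).card = ∑ B ∈ A.powerset, B.card := by
    apply Finset.sum_nbij' (fun B => A \ B) (fun B => A \ B)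
    · intro B hB; simp
    · intro B hB; simp
    · intro B hB; exact hdd B hB
    · intro B hB; exact hdd B hB
    · intro B hB; rfl
  have h2 : ∀ B ∈ A.powerset, B.card + (A \ B).card = A.card := by
    intro B hB
    have hBA := Finset.mem_powerset.1 hB
    rw [Finset.card_sdiff_of_subset hBA]
    have := Finset.card_le_card hBA
    omega
  have h3 : ∑ B ∈ A.powerset, (B.card + (A \ B).card) = ∑ B ∈ A.powerset, A.card :=
    Finset.sum_congr rfl h2
  rw [Finset.sum_add_distrib, h] at h3
  rw [Finset.sum_const, Finset.card_powerset, smul_eq_mul, mul_comm] at h3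
  omega

lemma aux_log (d k : ℕ) (hd : 1 ≤ d) :
    Real.log d / 2 * ((2:ℝ)^k + 1) ≤ (d:ℝ) + (k:ℝ) * 2^k / 2 := by
  have hP0 : (0:ℝ) < 2^k := by positivity
  have hP : (1:ℝ) ≤ 2^k := one_le_pow₀ (by norm_num)
  have hd1 : (1:ℝ) ≤ d := by exact_mod_cast hd
  have hlogd : 0 ≤ Real.log d := Real.log_nonneg hd1
  have hlog2 : Real.log 2 ≤ 1 := by
    have := Real.log_le_sub_one_of_pos (by norm_num : (0:ℝ) < 2); linarith
  have hkP : (k:ℝ) ≤ 2^k := by exact_mod_cast (Nat.lt_two_pow_self (n := k)).le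
  have h3 : Real.log ((d:ℝ)/2^k) = Real.log d - k * Real.log 2 := by
    rw [Real.log_div (by positivity) (by positivity), Real.log_pow]
  have h2 : Real.log ((d:ℝ)/2^k) ≤ (d:ℝ)/2^k - 1 :=
    Real.log_le_sub_one_of_pos (by positivity)
  have hl : Real.log d ≤ k * Real.log 2 + ((d:ℝ)/2^k - 1) := by linarith
  have hPd : (d:ℝ)/2^k * 2^k = d := div_mul_cancel₀ _ (ne_of_gt hP0)
  have hdiv : (d:ℝ)/2^k ≤ d := div_le_self (by positivity) hP
  nlinarith [mul_le_mul_of_nonneg_right hl (by positivity : (0:ℝ) ≤ 2^k + 1),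
    mul_le_mul_of_nonneg_right hlog2 (by positivity : (0:ℝ) ≤ (k:ℝ)*(2^k+1)),
    mul_le_mul_of_nonneg_right hkP (le_of_lt hP0)]

lemma key_vertex {V : Type*} [Fintype V] [DecidableEq V] (G : SimpleGraph V)
    [DecidableRel G.Adj] (htf : G.CliqueFree 3) (d : ℕ) (hd : 1 ≤ d) (v : V)
    (𝓘 : Finset (Finset V))
    (h𝓘 : 𝓘 = Finset.univ.filter (fun I => ∀ x ∈ I, ∀ y ∈ I, ¬ G.Adj x y)) :
    Real.log d / 2 * (𝓘.card : ℝ) ≤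
      ∑ I ∈ 𝓘, (((I ∩ G.neighborFinset v).card + (if v ∈ I then d else 0) : ℕ) : ℝ) := by
  classical
  have hmem : ∀ I : Finset V, I ∈ 𝓘 ↔ ∀ x ∈ I, ∀ y ∈ I, ¬ G.Adj x y := by
    intro I; simp [h𝓘]
  set M : Finset V := insert v (G.neighborFinset v) with hM
  set φ : Finset V → Finset V := fun I => I \ M with hφ
  set T := 𝓘.image φ with hT
  have hmaps : ∀ I ∈ 𝓘, φ I ∈ T := fun I hI => mem_image_of_mem φ hI
  rw [← Finset.sum_fiberwise_of_maps_to hmaps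
    (fun I => (((I ∩ G.neighborFinset v).card + (if v ∈ I then d else 0) : ℕ) : ℝ))]
  rw [Finset.card_eq_sum_card_fiberwise hmaps]
  push_cast
  rw [Finset.mul_sum]
  apply Finset.sum_le_sum
  intro J hJ
  -- facts about J
  obtain ⟨I₀, hI₀, hφI₀⟩ := Finset.mem_image.mp hJ
  have hJsub : J ⊆ I₀ := by rw [← hφI₀]; exact Finset.sdiff_subset
  have hJind : ∀ x ∈ J, ∀ y ∈ J, ¬ G.Adj x y := fun x hx y hy =>
    (hmem I₀).1 hI₀ x (hJsub hx) y (hJsub hy)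
  have hJM : ∀ u ∈ M, u ∉ J := by
    intro u hu hcon
    rw [← hφI₀] at hcon
    exact (Finset.mem_sdiff.1 hcon).2 hu
  have hJv : v ∉ J := hJM v (Finset.mem_insert_self _ _)
  have hJN : ∀ u ∈ G.neighborFinset v, u ∉ J := fun u hu =>
    hJM u (Finset.mem_insert_of_mem hu)
  have hvN : v ∉ G.neighborFinset v := by simp
  -- triangle-freeness: N(v) is independent
  have hNind : ∀ x ∈ G.neighborFinset v, ∀ y ∈ G.neighborFinset v, ¬ G.Adj x y := by
    intro x hx y hy hxy
    rw [SimpleGraph.mem_neighborFinset] at hx hy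
    exact htf {v, x, y} ⟨by
      simp only [Finset.coe_insert, Finset.coe_singleton]
      intro a ha b hb hab
      simp only [Set.mem_insert_iff, Set.mem_singleton_iff] at ha hb
      rcases ha with rfl | rfl | rfl <;> rcases hb with rfl | rfl | rfl <;>
        first | exact absurd rfl hab | assumption | exact hx.symm | exact hy.symm | exact hxy.symm,
      by
        rw [Finset.card_insert_of_notMem, Finset.card_insert_of_notMem, Finset.card_singleton]
        · simp only [Finset.mem_singleton]; exact G.ne_of_adj hxy
        · simp only [Finset.mem_insert, Finset.mem_singleton]
          push_neg
          exact ⟨G.ne_of_adj hx, G.ne_of_adj hy⟩⟩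
  set A : Finset V := (G.neighborFinset v).filter (fun u => ∀ w ∈ J, ¬ G.Adj u w) with hA
  have hAN : A ⊆ G.neighborFinset v := Finset.filter_subset _ _
  -- fiber characterization
  have hfiber : 𝓘.filter (fun I => φ I = J)
      = insert (insert v J) (A.powerset.image (fun B => J ∪ B)) := by
    ext I
    simp only [Finset.mem_filter, Finset.mem_insert, Finset.mem_image, Finset.mem_powerset]
    constructor
    · rintro ⟨hI, hφI⟩
      have hIind := (hmem I).1 hI
      have hJI : J ⊆ I := by rw [← hφI]; exact Finset.sdiff_subset
      by_cases hvI : v ∈ I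
      · left
        have hIN : ∀ u ∈ G.neighborFinset v, u ∉ I := by
          intro u hu hc
          rw [SimpleGraph.mem_neighborFinset] at hu
          exact hIind v hvI u hc hu
        have hsd : I \ M = I \ {v} := by
          ext a
          simp only [hM, Finset.mem_sdiff, Finset.mem_insert, Finset.mem_singleton]
          constructor
          · rintro ⟨ha, h2⟩; exact ⟨ha, fun h => h2 (Or.inl h)⟩
          · rintro ⟨ha, h2⟩
            refine ⟨ha, ?_⟩
            rintro (rfl | hN)
            · exact h2 rfl
            · exact hIN a hN ha
        rw [hφ] at hφI; simp only at hφI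
        rw [hsd, Finset.sdiff_singleton_eq_erase] at hφI
        rw [← hφI]
        exact (Finset.insert_erase hvI).symm
      · right
        refine ⟨I ∩ G.neighborFinset v, ?_, ?_⟩
        · intro u hu
          rw [Finset.mem_inter] at hu
          rw [hA, Finset.mem_filter]
          exact ⟨hu.2, fun w hw => hIind u hu.1 w (hJI hw)⟩
        · ext a
          simp only [Finset.mem_union, Finset.mem_inter]
          constructor
          · intro ha
            rcases ha with hJa | ⟨haI, _⟩
            · exact hJI hJa
            · exact haI
          · intro haI
            by_cases haM : a ∈ M
            · right
              refine ⟨haI, ?_⟩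
              rw [hM, Finset.mem_insert] at haM
              rcases haM with rfl | hN
              · exact absurd haI hvI
              · exact hN
            · left
              rw [← hφI, hφ]
              exact Finset.mem_sdiff.2 ⟨haI, haM⟩
    · intro h
      rcases h with rfl | ⟨B, hBA, rfl⟩
      · constructor
        · rw [hmem]
          intro x hx y hy hxy
          rw [Finset.mem_insert] at hx hy
          rcases hx with rfl | hx <;> rcases hy with rfl | hy
          · exact G.irrefl hxy
          · exact hJN y (by rw [SimpleGraph.mem_neighborFinset]; exact hxy) hy
          · exact hJN x (by rw [SimpleGraph.mem_neighborFinset]; exact hxy.symm) hx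
          · exact hJind x hx y hy hxy
        · rw [hφ]
          simp only
          rw [Finset.insert_sdiff_of_mem _ (Finset.mem_insert_self _ _)]
          ext a
          simp only [Finset.mem_sdiff]
          constructor
          · exact fun h => h.1
          · intro ha
            refine ⟨ha, fun haM => hJM a haM ha⟩
      · have hBN : B ⊆ G.neighborFinset v := hBA.trans hAN
        constructor
        · rw [hmem]
          intro x hx y hy hxy
          rw [Finset.mem_union] at hx hy
          rcases hx with hx | hx <;> rcases hy with hy | hy
          · exact hJind x hx y hy hxy
          · exact (Finset.mem_filter.1 (hBA hy)).2 x hx hxy.symm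
          · exact (Finset.mem_filter.1 (hBA hx)).2 y hy hxy
          · exact hNind x (hBN hx) y (hBN hy) hxy
        · rw [hφ]
          simp only
          ext a
          simp only [Finset.mem_sdiff, Finset.mem_union]
          constructor
          · rintro ⟨hJa | hBa, haM⟩
            · exact hJa
            · exact absurd (Finset.mem_insert_of_mem (hBN hBa)) haM
          · intro ha
            exact ⟨Or.inl ha, fun haM => hJM a haM ha⟩
  -- now compute sum and card over the fiber
  have hvnotmem : ∀ B ⊆ A, v ∉ J ∪ B := by
    intro B hB hc
    rw [Finset.mem_union] at hc
    rcases hc with hc | hc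
    · exact hJv hc
    · exact hvN (hAN (hB hc))
  have hrec : ∀ B ⊆ A, (J ∪ B) \ J = B := by
    intro B hB
    ext a
    simp only [Finset.mem_sdiff, Finset.mem_union]
    constructor
    · rintro ⟨hJa | hBa, haJ⟩
      · exact absurd hJa haJ
      · exact hBa
    · intro ha
      exact ⟨Or.inr ha, fun haJ => hJN a (hAN (hB ha)) haJ⟩
  have hnotimg : insert v J ∉ A.powerset.image (fun B => J ∪ B) := by
    rw [Finset.mem_image]
    rintro ⟨B, hB, hEq⟩
    exact hvnotmem B (Finset.mem_powerset.1 hB) (by rw [hEq]; exact Finset.mem_insert_self _ _)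
  have hinj : ∀ B₁ ∈ A.powerset, ∀ B₂ ∈ A.powerset, J ∪ B₁ = J ∪ B₂ → B₁ = B₂ := by
    intro B₁ h₁ B₂ h₂ hEq
    rw [← hrec B₁ (Finset.mem_powerset.1 h₁), ← hrec B₂ (Finset.mem_powerset.1 h₂), hEq]
  have hcardfiber : (𝓘.filter (fun I => φ I = J)).card = 2 ^ A.card + 1 := by
    rw [hfiber, Finset.card_insert_of_notMem hnotimg,
      Finset.card_image_of_injOn (fun B₁ h₁ B₂ h₂ => hinj B₁ h₁ B₂ h₂),
      Finset.card_powerset]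
  have hval1 : ((insert v J) ∩ G.neighborFinset v).card + (if v ∈ insert v J then d else 0)
      = d := by
    have : (insert v J) ∩ G.neighborFinset v = ∅ := by
      ext a
      simp only [Finset.mem_inter, Finset.mem_insert, Finset.notMem_empty, iff_false, not_and]
      rintro (rfl | haJ)
      · exact hvN
      · exact fun hN => hJN a hN haJ
    rw [this]
    simp
  have hval2 : ∀ B ⊆ A, ((J ∪ B) ∩ G.neighborFinset v).card
      + (if v ∈ J ∪ B then d else 0) = B.card := by
    intro B hB
    have h1 : (J ∪ B) ∩ G.neighborFinset v = B := by
      ext a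
      simp only [Finset.mem_inter, Finset.mem_union]
      constructor
      · rintro ⟨hJa | hBa, hN⟩
        · exact absurd hJa (hJN a hN)
        · exact hBa
      · intro ha
        exact ⟨Or.inr ha, hAN (hB ha)⟩
    rw [h1, if_neg (hvnotmem B hB)]
    omega
  have hsumfiber : ∑ I ∈ 𝓘.filter (fun I => φ I = J),
      ((I ∩ G.neighborFinset v).card + (if v ∈ I then d else 0))
      = d + ∑ B ∈ A.powerset, B.card := by
    rw [hfiber, Finset.sum_insert hnotimg, hval1,
      Finset.sum_image (fun B₁ h₁ B₂ h₂ => hinj B₁ h₁ B₂ h₂)]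
    congr 1
    apply Finset.sum_congr rfl
    intro B hB
    exact hval2 B (Finset.mem_powerset.1 hB)
  have h2S : 2 * ∑ B ∈ A.powerset, B.card = A.card * 2 ^ A.card := aux_sum_powerset_card A
  have hSr : ((∑ B ∈ A.powerset, B.card : ℕ) : ℝ) = (A.card : ℝ) * 2 ^ A.card / 2 := by
    have h := congrArg (fun n : ℕ => (n:ℝ)) h2S
    push_cast at h ⊢
    linarith
  calc Real.log d / 2 * ((𝓘.filter (fun I => φ I = J)).card : ℝ)
      = Real.log d / 2 * ((2:ℝ) ^ A.card + 1) := by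
        rw [hcardfiber]; push_cast; ring
    _ ≤ (d : ℝ) + (A.card : ℝ) * 2 ^ A.card / 2 := aux_log d A.card hd
    _ = ((d + ∑ B ∈ A.powerset, B.card : ℕ) : ℝ) := by push_cast [hSr]; ring
    _ = ∑ I ∈ 𝓘.filter (fun I => φ I = J),
        (((I ∩ G.neighborFinset v).card : ℝ) + (if v ∈ I then (d:ℝ) else 0)) := by
        rw [← hsumfiber]
        push_cast
        apply Finset.sum_congr rfl
        intro I hI
        split <;> simp


/-- Every finite triangle-free graph `G` with minimum degree `d ≥ 1` contains a semi-bipartite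
induced subgraph of average degree at least `(1/2)·log d`: there is a stable set `S` such that
the bipartite subgraph between `S` and `V(G) ∖ S` has average degree at least `(1/2)·log d`. -/
theorem stmt_12 {V : Type*} [Fintype V] [DecidableEq V] [Nonempty V] (G : SimpleGraph V)
    [DecidableRel G.Adj] (htf : G.CliqueFree 3) (d : ℕ) (hd : 1 ≤ d)
    (hmin : ∀ v : V, d ≤ G.degree v) :
    ∃ S : Finset V, (∀ x ∈ S, ∀ y ∈ S, ¬ G.Adj x y) ∧
      (1 / 2) * Real.log d ≤
        2 * (((S ×ˢ (Finset.univ \ S)).filter fun p => G.Adj p.1 p.2).card : ℝ) /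
          (Fintype.card V : ℝ) := by
  classical
  set 𝓘 : Finset (Finset V) := Finset.univ.filter (fun I => ∀ x ∈ I, ∀ y ∈ I, ¬ G.Adj x y)
    with h𝓘
  have hne : 𝓘.Nonempty := ⟨∅, by simp [h𝓘]⟩
  have hkey := fun v : V => key_vertex G htf d hd v 𝓘 h𝓘
  have hIb : ∀ I ∈ 𝓘,
      ∑ v : V, ((I ∩ G.neighborFinset v).card + (if v ∈ I then d else 0))
        ≤ 2 * ∑ u ∈ I, G.degree u := by
    intro I hI
    have hIind : ∀ x ∈ I, ∀ y ∈ I, ¬ G.Adj x y := by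
      rw [h𝓘, Finset.mem_filter] at hI; exact hI.2
    have e1 : ∑ v : V, (I ∩ G.neighborFinset v).card = ∑ u ∈ I, G.degree u := by
      have hcard : ∀ v : V,
          (I ∩ G.neighborFinset v).card = ∑ u ∈ I, (if G.Adj v u then 1 else 0) := by
        intro v
        have : I ∩ G.neighborFinset v = I.filter (fun u => G.Adj v u) := by
          ext u
          simp [SimpleGraph.mem_neighborFinset]
        rw [this, Finset.card_filter]
      rw [Finset.sum_congr rfl (fun v _ => hcard v), Finset.sum_comm]
      apply Finset.sum_congr rfl
      intro u _
      have : (Finset.univ.filter (fun v => G.Adj v u)) = G.neighborFinset u := by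
        ext w
        simp [SimpleGraph.mem_neighborFinset, G.adj_comm]
      rw [← Finset.card_filter, this, SimpleGraph.card_neighborFinset_eq_degree]
    have e2 : ∑ v : V, (if v ∈ I then d else 0) = d * I.card := by
      rw [Finset.sum_ite_mem, Finset.univ_inter, Finset.sum_const, smul_eq_mul, mul_comm]
    have e3 : d * I.card ≤ ∑ u ∈ I, G.degree u := by
      calc d * I.card = ∑ _u ∈ I, d := by rw [Finset.sum_const, smul_eq_mul, mul_comm]
        _ ≤ _ := Finset.sum_le_sum (fun u _ => hmin u)
    rw [Finset.sum_add_distrib, e1, e2]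
    omega
  set n := Fintype.card V with hn
  have total : Real.log d / 2 * 𝓘.card * n
      ≤ ∑ I ∈ 𝓘, (2 * ((∑ u ∈ I, G.degree u : ℕ) : ℝ)) := by
    calc Real.log d / 2 * 𝓘.card * n
        = ∑ _v : V, Real.log d / 2 * (𝓘.card : ℝ) := by
          rw [Finset.sum_const, Finset.card_univ, ← hn, nsmul_eq_mul]; ring
      _ ≤ ∑ v : V, ∑ I ∈ 𝓘,
            (((I ∩ G.neighborFinset v).card + (if v ∈ I then d else 0) : ℕ) : ℝ) :=
          Finset.sum_le_sum (fun v _ => hkey v)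
      _ = ∑ I ∈ 𝓘, ∑ v : V,
            (((I ∩ G.neighborFinset v).card + (if v ∈ I then d else 0) : ℕ) : ℝ) :=
          Finset.sum_comm
      _ ≤ ∑ I ∈ 𝓘, (2 * ((∑ u ∈ I, G.degree u : ℕ) : ℝ)) := by
          apply Finset.sum_le_sum
          intro I hI
          have h := hIb I hI
          have h2 : ((∑ v : V, ((I ∩ G.neighborFinset v).card + (if v ∈ I then d else 0)) : ℕ) : ℝ)
              ≤ ((2 * ∑ u ∈ I, G.degree u : ℕ) : ℝ) := Nat.cast_le.2 h
          push_cast at h2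
          push_cast
          linarith
  have hex : ∃ S ∈ 𝓘, Real.log d / 2 * n ≤ 2 * ((∑ u ∈ S, G.degree u : ℕ) : ℝ) := by
    apply Finset.exists_le_of_sum_le hne
    calc ∑ _I ∈ 𝓘, Real.log d / 2 * (n : ℝ) = 𝓘.card * (Real.log d / 2 * n) := by
          rw [Finset.sum_const, nsmul_eq_mul]
      _ = Real.log d / 2 * 𝓘.card * n := by ring
      _ ≤ _ := total
  obtain ⟨S, hS𝓘, hSb⟩ := hex
  have hSind : ∀ x ∈ S, ∀ y ∈ S, ¬ G.Adj x y := by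
    rw [h𝓘, Finset.mem_filter] at hS𝓘; exact hS𝓘.2
  refine ⟨S, hSind, ?_⟩
  have hedge : (((S ×ˢ (Finset.univ \ S)).filter fun p => G.Adj p.1 p.2).card)
      = ∑ u ∈ S, G.degree u := by
    rw [Finset.card_filter, Finset.sum_product]
    apply Finset.sum_congr rfl
    intro u hu
    have h1 : (Finset.univ \ S).filter (fun y => G.Adj u y) = G.neighborFinset u := by
      ext w
      simp only [Finset.mem_filter, Finset.mem_sdiff, Finset.mem_univ, true_and,
        SimpleGraph.mem_neighborFinset]
      constructor
      · exact fun h => h.2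
      · intro h
        exact ⟨fun hw => hSind u hu w hw h, h⟩
    rw [← Finset.card_filter, h1, SimpleGraph.card_neighborFinset_eq_degree]
  rw [hedge]
  have hnpos : 0 < (n : ℝ) := by
    rw [hn]; exact_mod_cast Fintype.card_pos
  rw [le_div_iff₀ hnpos]
  calc (1 / 2) * Real.log d * n = Real.log d / 2 * n := by ring
    _ ≤ 2 * ((∑ u ∈ S, G.degree u : ℕ) : ℝ) := hSb
end

section
/- A graph G contains a bipartite induced subgraph of minimum degree at least 2 if and only if G contains an induced cycle of even length. -/
open Finset

private lemma zmod_val_add_one' {n : ℕ} (hn : 2 ≤ n) (m : ZMod n) :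
    (m + 1).val = if m.val + 1 = n then 0 else m.val + 1 := by
  haveI : NeZero n := ⟨by omega⟩
  have h1 : (1 : ZMod n).val = 1 := by
    rw [ZMod.val_one_eq_one_mod]; exact Nat.mod_eq_of_lt (by omega)
  rw [ZMod.val_add, h1]
  have hlt := ZMod.val_lt m
  split_ifs with h
  · rw [h, Nat.mod_self]
  · exact Nat.mod_eq_of_lt (by omega)

private lemma exists_cycle_aux {V : Type*} [DecidableEq V] (G : SimpleGraph V)
    [DecidableRel G.Adj] (S : Finset V) (hS : S.Nonempty)
    (hdeg : ∀ v ∈ S, 2 ≤ (S.filter fun u => G.Adj v u).card) :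
    ∃ n : ℕ, 3 ≤ n ∧ ∃ c : ZMod n → V, Function.Injective c ∧ (∀ i, c i ∈ S) ∧
      ∀ i, G.Adj (c i) (c (i + 1)) := by
  classical
  set P : ℕ → Prop := fun m => ∃ p : Fin m → V, Function.Injective p ∧ (∀ i, p i ∈ S) ∧
      ∀ (i : ℕ) (h : i + 1 < m), G.Adj (p ⟨i, Nat.lt_of_succ_lt h⟩) (p ⟨i + 1, h⟩) with hP
  obtain ⟨v₀, hv₀⟩ := hS
  have hP1 : P 1 := ⟨fun _ => v₀, fun a b _ => Subsingleton.elim a b, fun _ => hv₀,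
    fun i h => by omega⟩
  have hbound : ∀ m, P m → m ≤ S.card := by
    intro m ⟨p, hinj, hmem, _⟩
    calc m = (Finset.univ : Finset (Fin m)).card := by simp
    _ ≤ S.card := Finset.card_le_card_of_injOn p (fun a _ => hmem a) hinj.injOn
  set N := Nat.findGreatest P S.card with hN
  have hN1 : 1 ≤ N := Nat.le_findGreatest (hbound 1 hP1) hP1
  have hPN : P N := Nat.findGreatest_spec (hbound 1 hP1) hP1
  obtain ⟨p, hinj, hmem, hadj⟩ := hPN
  have hN1' : N - 1 < N := by omega
  set v := p ⟨N - 1, hN1'⟩ with hv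
  set T := S.filter (fun u => G.Adj v u) with hT
  have hT2 : 2 ≤ T.card := hdeg v (hmem _)
  -- every neighbor of v in S lies on the path
  have hrange : ∀ u ∈ T, ∃ j : Fin N, p j = u := by
    intro u huT
    by_contra hc
    push_neg at hc
    have huS : u ∈ S := (Finset.mem_filter.mp huT).1
    have hvu : G.Adj v u := (Finset.mem_filter.mp huT).2
    have hPN1 : P (N + 1) := by
      refine ⟨fun i => if h : i.val < N then p ⟨i.val, h⟩ else u, ?_, ?_, ?_⟩
      · intro a b hab
        by_cases ha : a.val < N <;> by_cases hb : b.val < N <;>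
          simp only [dif_pos, dif_neg, ha, hb] at hab
        · exact Fin.ext (by simpa using congrArg Fin.val (hinj hab))
        · exact absurd hab (hc _)
        · exact absurd hab.symm (hc _)
        · exact Fin.ext (by omega)
      · intro i
        by_cases h : i.val < N
        · simpa [h] using hmem _
        · simpa [h] using huS
      · intro i h
        by_cases h2 : i + 1 < N
        · have h3 : i < N := by omega
          simpa [h2, h3] using hadj i h2
        · have h3 : i < N := by omega
          have h4 : ¬ (i + 1 < N) := h2
          have h5 : i = N - 1 := by omega
          simp only [dif_pos h3, dif_neg h4]
          have : (⟨i, h3⟩ : Fin N) = ⟨N - 1, hN1'⟩ := Fin.ext (show i = N - 1 by omega)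
          rw [this]
          exact hvu
    exact Nat.findGreatest_is_greatest (by omega) (hbound _ hPN1) hPN1
  have hN2' : N - 2 < N := by omega
  obtain ⟨u, huT, hune⟩ := Finset.exists_mem_ne (lt_of_lt_of_le one_lt_two hT2) (p ⟨N - 2, hN2'⟩)
  obtain ⟨j, hj⟩ := hrange u huT
  have hvu : G.Adj v u := (Finset.mem_filter.mp huT).2
  have hjne1 : j.val ≠ N - 1 := by
    intro h
    have : j = ⟨N - 1, hN1'⟩ := Fin.ext h
    rw [this] at hj
    exact G.irrefl (hj ▸ hvu)
  have hjne2 : j.val ≠ N - 2 := by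
    intro h
    have hjj : j = (⟨N - 2, hN2'⟩ : Fin N) := Fin.ext h
    rw [hjj] at hj
    exact hune hj.symm
  have hjlt := j.isLt
  have hN3 : 3 ≤ N := by omega
  set L := N - j.val with hL
  have hL3 : 3 ≤ L := by omega
  haveI : NeZero L := ⟨by omega⟩
  refine ⟨L, hL3, fun m => p ⟨j.val + m.val, by have := ZMod.val_lt m; omega⟩, ?_, fun _ => hmem _, ?_⟩
  · intro m₁ m₂ h
    have := congrArg Fin.val (hinj h)
    simp only at this
    exact ZMod.val_injective L (by omega)
  · intro m
    show G.Adj (p ⟨j.val + m.val, by have := ZMod.val_lt m; omega⟩)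
      (p ⟨j.val + (m + 1).val, by have := ZMod.val_lt (m + 1); omega⟩)
    have hval := zmod_val_add_one' (by omega) m
    have hmlt := ZMod.val_lt m
    split_ifs at hval with hcase
    · -- wrap-around edge
      have e1 : (⟨j.val + m.val, by omega⟩ : Fin N) = ⟨N - 1, hN1'⟩ :=
        Fin.ext (show j.val + m.val = N - 1 by omega)
      have e2 : (⟨j.val + (m+1).val, by have := ZMod.val_lt (m+1); omega⟩ : Fin N) = j := by
        apply Fin.ext; simp [hval]
      simp only [e1, e2, hj]
      exact hvu
    · have e2 : (⟨j.val + (m+1).val, by have := ZMod.val_lt (m+1); omega⟩ : Fin N)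
          = ⟨(j.val + m.val) + 1, by omega⟩ :=
        Fin.ext (show j.val + (m + 1).val = (j.val + m.val) + 1 by omega)
      rw [e2]
      exact hadj (j.val + m.val) (by omega)

/-- A graph contains a bipartite induced subgraph of minimum degree at least 2 (an induced
subgraph on the union of two disjoint stable sets with all degrees at least 2) if and only if
it contains an induced cycle of even length (at least 4). -/
theorem stmt_13 {V : Type*} [DecidableEq V] (G : SimpleGraph V) [DecidableRel G.Adj] :
    (∃ S₁ S₂ : Finset V, Disjoint S₁ S₂ ∧
        (∀ x ∈ S₁, ∀ y ∈ S₁, ¬ G.Adj x y) ∧ (∀ x ∈ S₂, ∀ y ∈ S₂, ¬ G.Adj x y) ∧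
        (S₁ ∪ S₂).Nonempty ∧
        ∀ v ∈ S₁ ∪ S₂, 2 ≤ ((S₁ ∪ S₂).filter fun u => G.Adj v u).card) ↔
    (∃ n : ℕ, 4 ≤ n ∧ Even n ∧ ∃ f : ZMod n ↪ V,
        ∀ i j : ZMod n, G.Adj (f i) (f j) ↔ (j = i + 1 ∨ i = j + 1)) := by
  classical
  constructor
  · rintro ⟨S₁, S₂, hdisj, h1, h2, hne, hdeg⟩
    set S := S₁ ∪ S₂ with hS
    obtain ⟨L, hL3, hCL⟩ := exists_cycle_aux G S hne hdeg
    set Q : ℕ → Prop := fun n => 3 ≤ n ∧ ∃ c : ZMod n → V, Function.Injective c ∧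
        (∀ i, c i ∈ S) ∧ ∀ i, G.Adj (c i) (c (i + 1)) with hQ
    have hQL : Q L := ⟨hL3, hCL⟩
    set n := Nat.find ⟨L, hQL⟩ with hn
    obtain ⟨hn3, c, hcinj, hcmem, hcedge⟩ : Q n := Nat.find_spec ⟨L, hQL⟩
    haveI : NeZero n := ⟨by omega⟩
    -- minimality: the cycle is induced
    have hind : ∀ i j : ZMod n, G.Adj (c i) (c j) → (j = i + 1 ∨ i = j + 1) := by
      intro i j hadj
      by_contra hcon
      push_neg at hcon
      obtain ⟨hj1, hi1⟩ := hcon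
      have hij : i ≠ j := by rintro rfl; exact G.irrefl hadj
      set d := j - i with hd
      have hd0 : d ≠ 0 := sub_ne_zero.mpr hij.symm
      have hd1 : d ≠ 1 := fun h => hj1 (by rw [sub_eq_iff_eq_add.mp h]; ring)
      have hdm1 : d ≠ -1 := by
        intro h
        apply hi1
        have : i - j = 1 := by rw [show i - j = -(j - i) by ring, ← hd, h]; ring
        rw [sub_eq_iff_eq_add.mp this]; ring
      have hdval2 : 2 ≤ d.val := by
        rcases Nat.lt_or_ge d.val 2 with h | h
        · interval_cases hv : d.val
          · exact absurd ((ZMod.val_eq_zero d).mp hv) hd0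
          · exact absurd (by rw [← ZMod.natCast_zmod_val d, hv, Nat.cast_one]) hd1
        · exact h
      have hdvaln : d.val ≤ n - 2 := by
        have hlt := ZMod.val_lt d
        rcases Nat.lt_or_ge d.val (n - 1) with h | h
        · omega
        · exfalso
          have hv : d.val = n - 1 := by omega
          apply hdm1
          rw [← ZMod.natCast_zmod_val d, hv]
          have : ((n - 1 : ℕ) : ZMod n) = (n : ZMod n) - 1 := by
            rw [Nat.cast_sub (by omega)]; simp
          rw [this, ZMod.natCast_self]; ring
      haveI : NeZero (d.val + 1) := ⟨by omega⟩
      have hQd : Q (d.val + 1) := by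
        refine ⟨by omega, fun m => c (i + (m.val : ZMod n)), ?_, fun _ => hcmem _, ?_⟩
        · intro m₁ m₂ h
          have h2 := add_left_cancel (hcinj h)
          have hm1 := ZMod.val_lt m₁
          have hm2 := ZMod.val_lt m₂
          have : ((m₁.val : ℕ) : ZMod n).val = ((m₂.val : ℕ) : ZMod n).val := by rw [h2]
          rw [ZMod.val_cast_of_lt (by omega), ZMod.val_cast_of_lt (by omega)] at this
          exact ZMod.val_injective _ this
        · intro m
          show G.Adj (c (i + ((m.val : ℕ) : ZMod n))) (c (i + (((m + 1).val : ℕ) : ZMod n)))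
          have hval := zmod_val_add_one' (by omega) m
          have hmlt := ZMod.val_lt m
          split_ifs at hval with hcase
          · have e1 : i + ((m.val : ℕ) : ZMod n) = j := by
              have : m.val = d.val := by omega
              rw [this, ZMod.natCast_zmod_val, hd]; ring
            have e2 : i + (((m + 1).val : ℕ) : ZMod n) = i := by rw [hval]; simp
            rw [e1, e2]
            exact hadj.symm
          · have e2 : i + (((m + 1).val : ℕ) : ZMod n) = (i + (m.val : ℕ)) + 1 := by
              rw [hval]; push_cast; ring
            rw [e2]
            exact hcedge _
      exact Nat.find_min ⟨L, hQL⟩ (by omega) hQd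
    -- alternation gives evenness
    have halt : ∀ i : ZMod n, (c (i + 1) ∈ S₁ ↔ ¬ c i ∈ S₁) := by
      intro i
      have hadj := hcedge i
      have hmi := hcmem i
      have hmi1 := hcmem (i + 1)
      rw [hS, Finset.mem_union] at hmi hmi1
      constructor
      · intro hin hin2
        exact h1 _ hin2 _ hin hadj
      · intro hnin
        rcases hmi with h | h
        · exact absurd h hnin
        · rcases hmi1 with h' | h'
          · exact h'
          · exact absurd hadj (h2 _ h _ h')
    have hclaim : ∀ k : ℕ, (c (k : ZMod n) ∈ S₁ ↔ (Even k ↔ c 0 ∈ S₁)) := by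
      intro k
      induction k with
      | zero => simp
      | succ k ih =>
        have : ((k + 1 : ℕ) : ZMod n) = (k : ZMod n) + 1 := by push_cast; ring
        rw [this, halt, ih, Nat.even_add_one]
        tauto
    have heven : Even n := by
      have h := hclaim n
      rw [ZMod.natCast_self] at h
      tauto
    refine ⟨n, ?_, heven, ⟨c, hcinj⟩, ?_⟩
    · rcases Nat.even_iff.mp heven with h; omega
    · intro i j
      constructor
      · exact hind i j
      · rintro (rfl | rfl)
        · exact hcedge i
        · exact (hcedge j).symm
  · rintro ⟨n, hn4, hneven, f, hf⟩
    haveI : NeZero n := ⟨by omega⟩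
    set par : ZMod n →+* ZMod 2 := ZMod.castHom hneven.two_dvd (ZMod 2) with hpar
    have hpar01 : ∀ i : ZMod n, par i = 0 ∨ par i = 1 := by
      intro i; revert i
      intro i
      rcases (show ∀ a : ZMod 2, a = 0 ∨ a = 1 by decide) (par i) with h | h
      · exact Or.inl h
      · exact Or.inr h
    have hpadd : ∀ i : ZMod n, par (i + 1) = par i + 1 := by
      intro i; rw [map_add, map_one]
    refine ⟨(univ.filter fun i => par i = 0).image f, (univ.filter fun i => par i = 1).image f,
      ?_, ?_, ?_, ?_, ?_⟩
    · rw [Finset.disjoint_left]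
      rintro x hx1 hx2
      simp only [Finset.mem_image, Finset.mem_filter, Finset.mem_univ, true_and] at hx1 hx2
      obtain ⟨i, hi0, rfl⟩ := hx1
      obtain ⟨j, hj1, hji⟩ := hx2
      rw [f.injective hji] at hj1
      rw [hi0] at hj1
      exact absurd hj1 (by decide)
    · intro x hx y hy hadj
      simp only [Finset.mem_image, Finset.mem_filter, Finset.mem_univ, true_and] at hx hy
      obtain ⟨i, hi0, rfl⟩ := hx
      obtain ⟨j, hj0, rfl⟩ := hy
      rcases (hf i j).mp hadj with h | h
      · rw [h, hpadd, hi0] at hj0; exact absurd hj0 (by decide)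
      · rw [h, hpadd, hj0] at hi0; exact absurd hi0 (by decide)
    · intro x hx y hy hadj
      simp only [Finset.mem_image, Finset.mem_filter, Finset.mem_univ, true_and] at hx hy
      obtain ⟨i, hi0, rfl⟩ := hx
      obtain ⟨j, hj0, rfl⟩ := hy
      rcases (hf i j).mp hadj with h | h
      · rw [h, hpadd, hi0] at hj0; exact absurd hj0 (by decide)
      · rw [h, hpadd, hj0] at hi0; exact absurd hi0 (by decide)
    · refine ⟨f 0, Finset.mem_union_left _ ?_⟩
      simp only [Finset.mem_image, Finset.mem_filter, Finset.mem_univ, true_and]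
      exact ⟨0, map_zero par, rfl⟩
    · have hmemU : ∀ k : ZMod n, f k ∈
          (univ.filter fun i => par i = 0).image f ∪ (univ.filter fun i => par i = 1).image f := by
        intro k
        rcases hpar01 k with h | h
        · exact Finset.mem_union_left _ (Finset.mem_image.mpr ⟨k, by simp [h], rfl⟩)
        · exact Finset.mem_union_right _ (Finset.mem_image.mpr ⟨k, by simp [h], rfl⟩)
      intro v hv
      rw [Finset.mem_union] at hv
      have hvex : ∃ i : ZMod n, v = f i := by
        rcases hv with h | h <;>
          · simp only [Finset.mem_image, Finset.mem_filter, Finset.mem_univ, true_and] at h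
            obtain ⟨i, _, hi⟩ := h
            exact ⟨i, hi.symm⟩
      obtain ⟨i, rfl⟩ := hvex
      have hne2 : f (i + 1) ≠ f (i - 1) := by
        intro h
        have := f.injective h
        have h2 : (2 : ZMod n) = 0 := by
          have : i + 1 - (i - 1) = 0 := by rw [this]; ring
          calc (2 : ZMod n) = i + 1 - (i - 1) := by ring
          _ = 0 := this
        rw [show ((2 : ZMod n)) = ((2 : ℕ) : ZMod n) by push_cast; ring,
          ZMod.natCast_eq_zero_iff] at h2
        exact absurd (Nat.le_of_dvd (by norm_num) h2) (by omega)
      have hsub : ({f (i + 1), f (i - 1)} : Finset V) ⊆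
          ((univ.filter fun k => par k = 0).image f ∪ (univ.filter fun k => par k = 1).image f).filter
            (fun u => G.Adj (f i) u) := by
        intro x hx
        rw [Finset.mem_insert, Finset.mem_singleton] at hx
        rcases hx with rfl | rfl
        · exact Finset.mem_filter.mpr ⟨hmemU _, (hf i (i + 1)).mpr (Or.inl rfl)⟩
        · exact Finset.mem_filter.mpr ⟨hmemU _, (hf i (i - 1)).mpr (Or.inr (by ring))⟩
      calc 2 = ({f (i + 1), f (i - 1)} : Finset V).card := (Finset.card_pair hne2).symm
      _ ≤ _ := Finset.card_le_card hsub
end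

section
/- For every real x > 1, (1 − (log x)/(2x))·log₂(2x/(log x) − 1) − log x ≥ 0 when additionally x ≥ 2; in particular the inequality (1 − (log x)/(2x))·log₂(2x/log x − 1) ≥ log x holds for all x ≥ 2. -/
lemma tangent_log {a y : ℝ} (ha : 0 < a) (hy : 0 < y) :
    Real.log y ≤ Real.log a + y / a - 1 := by
  have h := Real.log_le_sub_one_of_pos (show 0 < y / a by positivity)
  rw [Real.log_div (ne_of_gt hy) (ne_of_gt ha)] at h
  linarith

lemma lemA {a t : ℝ} (ha : 1 ≤ a) (hat : a ≤ t) :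
    (Real.log t + 1) * a ≤ (Real.log a + 1) * t := by
  have ha0 : 0 < a := by linarith
  have ht0 : 0 < t := by linarith
  have h := tangent_log ha0 ht0
  have hla : 0 ≤ Real.log a := Real.log_nonneg ha
  have h1 : (Real.log t + 1) * a ≤ (Real.log a + t / a) * a := by nlinarith
  have h2 : (Real.log a + t / a) * a = Real.log a * a + t := by field_simp
  nlinarith [mul_le_mul_of_nonneg_left hat hla]

set_option maxHeartbeats 1000000 in
/-- For every real `x ≥ 2`, `(1 − (log x)/(2x))·log₂(2x/(log x) − 1) ≥ log x`, where `log` is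
the natural logarithm and `log₂` the base-2 logarithm. -/
theorem stmt_19 (x : ℝ) (hx : 2 ≤ x) :
    Real.log x ≤ (1 - Real.log x / (2 * x)) * Real.logb 2 (2 * x / Real.log x - 1) := by
  have hx0 : (0:ℝ) < x := by linarith
  have hL0 : 0 < Real.log x := Real.log_pos (by linarith)
  have he : (2.7182818283:ℝ) < Real.exp 1 := Real.exp_one_gt_d9
  have he' : Real.exp 1 < 2.7182818286 := Real.exp_one_lt_d9
  have he0 : (0:ℝ) < Real.exp 1 := Real.exp_pos 1
  have hl2 : (0.6931471803:ℝ) < Real.log 2 := Real.log_two_gt_d9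
  have hl2' : Real.log 2 < 0.6931471808 := Real.log_two_lt_d9
  have hlog2pos : (0:ℝ) < Real.log 2 := by linarith
  set L := Real.log x with hLdef
  have hlog_div_e : ∀ y : ℝ, 0 < y → Real.log y ≤ y / Real.exp 1 := by
    intro y hy
    have := tangent_log he0 hy
    simpa [Real.log_exp] using this
  have hLe : L ≤ x / Real.exp 1 := hlog_div_e x hx0
  set t := 2 * x / L with htdef
  have hte : 2 * Real.exp 1 ≤ t := by
    rw [htdef, le_div_iff₀ hL0]
    have h1 : 2 * Real.exp 1 * L ≤ 2 * Real.exp 1 * (x / Real.exp 1) :=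
      mul_le_mul_of_nonneg_left hLe (by positivity)
    have h2 : 2 * Real.exp 1 * (x / Real.exp 1) = 2 * x := by field_simp
    linarith
  have ht1 : (1:ℝ) < t := by nlinarith
  have htm1 : 0 < t - 1 := by linarith
  have ht0 : (0:ℝ) < t := by linarith
  have hA : Real.log t - 1/(t-1) ≤ Real.log (t - 1) := by
    have h := tangent_log htm1 ht0
    have h2 : t/(t-1) - 1 = 1/(t-1) := by field_simp; ring
    linarith
  have h1t : 0 < 1 - 1/t := by
    rw [sub_pos, div_lt_one ht0]; exact ht1
  have hB : Real.log t - (Real.log t + 1)/t ≤ (1 - 1/t) * Real.log (t-1) := by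
    have h1 : (1 - 1/t) * (Real.log t - 1/(t-1)) ≤ (1 - 1/t) * Real.log (t-1) :=
      mul_le_mul_of_nonneg_left hA (le_of_lt h1t)
    have h2 : (1 - 1/t) * (Real.log t - 1/(t-1)) = Real.log t - (Real.log t + 1)/t := by
      field_simp
      ring
    linarith
  have hC : Real.log t = Real.log 2 + L - Real.log L := by
    rw [htdef, Real.log_div (by positivity) (ne_of_gt hL0),
      Real.log_mul (by norm_num) (ne_of_gt hx0)]
  have hkey : (Real.log t + 1)/t ≤ (1 - Real.log 2) * L - Real.log L + Real.log 2 := by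
    rcases le_or_gt L 2 with hL2 | hL2
    · -- case L ≤ 2, use t ≥ 2e
      have ha : (1:ℝ) ≤ 2 * Real.exp 1 := by nlinarith
      have h := lemA ha hte
      have hloga : Real.log (2 * Real.exp 1) = Real.log 2 + 1 := by
        rw [Real.log_mul (by norm_num) (ne_of_gt he0), Real.log_exp]
      rw [hloga] at h
      have hdiv : (Real.log t + 1)/t ≤ (Real.log 2 + 2)/(2 * Real.exp 1) := by
        rw [div_le_div_iff₀ ht0 (by positivity)]
        linarith
      have hlL : Real.log L ≤ L / Real.exp 1 := hlog_div_e L hL0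
      have hnum : (Real.log 2 + 2) / (2 * Real.exp 1) ≤ 2 - Real.log 2 - 2 / Real.exp 1 := by
        rw [div_le_iff₀ (by positivity)]
        have hprod : Real.exp 1 * Real.log 2 < 2.7182818286 * 0.6931471808 := by nlinarith
        have hexp : (2 - Real.log 2 - 2/Real.exp 1) * (2*Real.exp 1)
            = 4*Real.exp 1 - 2*(Real.exp 1 * Real.log 2) - 4 := by field_simp; ring
        rw [hexp]
        nlinarith
      -- coefficient 1 - log 2 - 1/e ≤ 0, L ≤ 2
      have hcoef : 1 - Real.log 2 - 1/Real.exp 1 ≤ 0 := by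
        have h9 : (0.3678:ℝ) < 1/Real.exp 1 := by
          rw [lt_div_iff₀ he0]; nlinarith
        linarith
      have hp : 0 ≤ (1 - Real.log 2 - 1/Real.exp 1) * (L - 2) := by
        nlinarith [mul_nonneg (neg_nonneg.mpr hcoef) (show (0:ℝ) ≤ 2 - L by linarith)]
      have hmono : 2 - Real.log 2 - 2/Real.exp 1 ≤ (1 - Real.log 2) * L - L/Real.exp 1 + Real.log 2 := by
        have hexp : (1 - Real.log 2 - 1/Real.exp 1) * (L - 2)
            = ((1 - Real.log 2) * L - L/Real.exp 1 + Real.log 2) - (2 - Real.log 2 - 2/Real.exp 1) := by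
          field_simp
          ring
        linarith [hp, hexp.le, hexp.ge]
      linarith
    · -- case L ≥ 2, use t ≥ e²
      have hxL : x = Real.exp L := (Real.exp_log hx0).symm
      have hexp2 : Real.exp 2 = Real.exp 1 * Real.exp 1 := by
        rw [← Real.exp_add]; norm_num
      have hte2 : Real.exp 2 ≤ t := by
        rw [htdef, le_div_iff₀ hL0]
        have h1 : (L - 2) + 1 ≤ Real.exp (L - 2) := Real.add_one_le_exp _
        have h2 : Real.exp L = Real.exp 2 * Real.exp (L - 2) := by
          rw [← Real.exp_add]; ring_nf
        have hE0 : (0:ℝ) < Real.exp 2 := Real.exp_pos 2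
        nlinarith [hE0]
      have ha : (1:ℝ) ≤ Real.exp 2 := Real.one_le_exp (by norm_num)
      have h := lemA ha hte2
      rw [Real.log_exp] at h
      have hE0 : (0:ℝ) < Real.exp 2 := Real.exp_pos 2
      have hdiv : (Real.log t + 1)/t ≤ 3/Real.exp 2 := by
        rw [div_le_div_iff₀ ht0 hE0]
        linarith
      have hlL : Real.log L ≤ 2 * Real.log 2 + L/4 - 1 := by
        have h4 : Real.log (4:ℝ) = 2 * Real.log 2 := by
          rw [show (4:ℝ) = 2 * 2 by norm_num, Real.log_mul (by norm_num) (by norm_num)]; ring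
        have := tangent_log (show (0:ℝ) < 4 by norm_num) hL0
        rw [h4] at this; linarith
      have hnum : 3/Real.exp 2 ≤ 5/2 - 3 * Real.log 2 := by
        rw [div_le_iff₀ hE0]
        have hE : (7.38905609:ℝ) < Real.exp 2 := by rw [hexp2]; nlinarith
        have hcoef2 : (0.42:ℝ) ≤ 5/2 - 3 * Real.log 2 := by linarith
        nlinarith [mul_le_mul hcoef2 hE.le (by norm_num) (by linarith), hcoef2, hE]
      have hmono : 5/2 - 3 * Real.log 2 ≤ (1 - Real.log 2) * L - (2 * Real.log 2 + L/4 - 1) + Real.log 2 := by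
        nlinarith [mul_nonneg (show (0:ℝ) ≤ 3/4 - Real.log 2 by nlinarith) (show (0:ℝ) ≤ L - 2 by linarith)]
      linarith
  -- assemble
  have hfrac : L / (2*x) = 1/t := by rw [htdef, one_div_div]
  rw [Real.logb, hfrac, ← mul_div_assoc, le_div_iff₀ hlog2pos]
  rw [hC] at hB hkey
  nlinarith [hB, hkey]
end
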